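/- arXiv:1710.08379 — 7 statements merged into one kernel-verified Lean document; each statement's English description precedes it below -/
import Mathlib

section
/- Let W be a BMS channel, let λ and N₁ be positive integers, and let R ∈ [0,1] satisfy R·N₁·2^λ ∈ ℤ. Let A = {x ∈ [max(0,2R−1), min(1,2R)] : x·N₁·2^{λ−1} ∈ ℤ}. Then E_λ(W,R,N₁) = max_{R₁∈A} [ −ln( exp(−N₁·2^{λ−1}·E_{λ−1}(W⁻,R₁,N₁)) + exp(−N₁·2^{λ−1}·E_{λ−1}(W⁺,2R−R₁,N₁)) ) ] / (N₁·2^λ), where for λ = 1 the quantities on the right are E₀(·,·,N₁) = E(·,·,N₁). -/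
/-!
Since `−ln` is antitone, `E_λ(W, R, N₁)` is `−ln` of the minimum, over admissible rate tuples,
of the error sum `Σᵢ exp(−N₁ E(Wᵢ, Rᵢ, N₁))`, and `exp(−N₁ 2^λ E_λ)` is that minimum itself.
The sub-channels `W_i` of `W` are those of `W⁻` followed by those of `W⁺`, so a rate tuple for `W`
is the concatenation of a tuple for `W⁻` with rate sum `2^(λ-1) R₁` and one for `W⁺` with rate sum
`2^(λ-1) (2R − R₁)`, and its error sum is the sum of theirs. Minimizing first over the two halves
and then over the split `R₁` gives the recursion. The integrality constraints `Rᵢ N₁ ∈ ℤ` make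
every minimum one over a finite nonempty set.
-/

open scoped BigOperators

/-- A binary-input discrete channel: a finite output alphabet `Y` and a kernel
`W x y` = probability of output `y` given input `x`. -/
structure PreChannel where
  Y : Type
  [fin : Fintype Y]
  W : Bool → Y → ℝ

attribute [instance] PreChannel.fin

namespace PreChannel

/-- `W` is a valid binary memoryless symmetric (BMS) channel. -/
def IsBMS (W : PreChannel) : Prop :=
  (∀ x y, 0 ≤ W.W x y) ∧ (∀ x, ∑ y, W.W x y = 1) ∧
    ∃ π : W.Y → W.Y, Function.Involutive π ∧ ∀ y, W.W false (π y) = W.W true y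

/-- The polar "minus" transform `W⁻`. -/
noncomputable def minus (W : PreChannel) : PreChannel where
  Y := W.Y × W.Y
  fin := inferInstance
  W := fun u₁ p => ∑ u₂ : Bool, (1 / 2) * W.W (Bool.xor u₁ u₂) p.1 * W.W u₂ p.2

/-- The polar "plus" transform `W⁺`; output is `(y₁, y₂, u₁)`. -/
noncomputable def plus (W : PreChannel) : PreChannel where
  Y := W.Y × W.Y × Bool
  fin := inferInstance
  W := fun u₂ p => (1 / 2) * W.W (Bool.xor p.2.2 u₂) p.1 * W.W u₂ p.2.1

/-- Capacity `I(W)` (in bits). -/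
noncomputable def cap (W : PreChannel) : ℝ :=
  ∑ x : Bool, ∑ y, (1 / 2) * W.W x y *
    Real.logb 2 (W.W x y / ((1 / 2) * W.W false y + (1 / 2) * W.W true y))

/-- Dispersion `V(W)`. -/
noncomputable def disp (W : PreChannel) : ℝ :=
  (∑ x : Bool, ∑ y, (1 / 2) * W.W x y *
      (Real.logb 2 (W.W x y / ((1 / 2) * W.W false y + (1 / 2) * W.W true y))) ^ 2)
    - cap W ^ 2

/-- Gallager's function `E₀(W, ρ)` (natural logarithm). -/
noncomputable def E0 (W : PreChannel) (ρ : ℝ) : ℝ :=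
  - Real.log
      (∑ y, ((1 / 2) * (W.W false y ^ (1 / (1 + ρ)) + W.W true y ^ (1 / (1 + ρ)))) ^ (1 + ρ))

/-- Bhattacharyya parameter `Z(W)`. -/
noncomputable def Zb (W : PreChannel) : ℝ := ∑ y, Real.sqrt (W.W false y * W.W true y)

/-- `E_x(W, ρ) = −ρ ln[(1 + Z(W)^{1/ρ})/2]`. -/
noncomputable def Ex (W : PreChannel) (ρ : ℝ) : ℝ :=
  - ρ * Real.log ((1 + Zb W ^ (1 / ρ)) / 2)

/-- Random-coding exponent `E_r(W, R)` as an extended real: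
`max_{0 ≤ ρ ≤ 1} [E₀(W,ρ) − ρ R ln 2]` for `0 < R ≤ 1`, `+∞` at `R = 0`, `0` for `R > 1`. -/
noncomputable def Er (W : PreChannel) (R : ℝ) : EReal :=
  if R = 0 then ⊤
  else if 1 < R then 0
  else ((sSup {x : ℝ | ∃ ρ ∈ Set.Icc (0 : ℝ) 1, x = E0 W ρ - ρ * R * Real.log 2} : ℝ) : EReal)

/-- Expurgated exponent `E_ex(W, R) = sup_{ρ ≥ 1} [E_x(W,ρ) − ρ R ln 2]`. -/
noncomputable def Eex (W : PreChannel) (R : ℝ) : EReal :=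
  ⨆ ρ : {ρ : ℝ // 1 ≤ ρ}, ((Ex W ρ.1 - ρ.1 * R * Real.log 2 : ℝ) : EReal)

/-- `E(W, R) = max [E_r(W,R), E_ex(W,R)]` for `R ≤ 1`, and `0` for `R > 1`. -/
noncomputable def Echan (W : PreChannel) (R : ℝ) : EReal :=
  if 1 < R then 0 else max (Er W R) (Eex W R)

/-- `E(W, R, N₁) = max [E_r(W,R), E_ex(W, R + 2/N₁)]`. -/
noncomputable def EchanN (W : PreChannel) (R : ℝ) (N₁ : ℕ) : EReal :=
  max (Er W R) (Eex W (R + 2 / (N₁ : ℝ)))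

/-- Sub-channel `Wᵢ` after `lam` polarization steps: the most significant bit of `i`
is applied first, bit `1` = plus, bit `0` = minus. -/
noncomputable def subch : PreChannel → (lam : ℕ) → ℕ → PreChannel
  | W, 0, _ => W
  | W, l + 1, i => subch (if i / 2 ^ l % 2 = 1 then W.plus else W.minus) l (i % 2 ^ l)

/-- `W^s` for a sign sequence `s` (`true` = plus, `false` = minus), applied in order. -/
noncomputable def polarSeq : PreChannel → List Bool → PreChannel
  | W, [] => W
  | W, b :: rest => polarSeq (if b then W.plus else W.minus) rest

/-- `exp(−t·E)` for `E ∈ [0, +∞]`, with the convention `exp(−∞) = 0`. -/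
noncomputable def dexp (t : ℝ) (E : EReal) : ℝ :=
  if E = ⊤ then 0 else Real.exp (-t * E.toReal)

/-- `−ln s` with the convention `−ln 0 = +∞`. -/
noncomputable def nlog (s : ℝ) : EReal :=
  if s ≤ 0 then ⊤ else ((-Real.log s : ℝ) : EReal)

/-- The finite-blocklength exponent `E_λ(W, R, N₁)`:
`(1/(N₁ 2^λ)) · max over admissible rate tuples of −ln Σᵢ exp(−N₁ E(Wᵢ, Rᵢ, N₁))`. -/
noncomputable def ElamN (W : PreChannel) (lam N₁ : ℕ) (R : ℝ) : EReal :=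
  ((1 / ((N₁ : ℝ) * 2 ^ lam) : ℝ) : EReal) *
    sSup {v : EReal | ∃ Rv : Fin (2 ^ lam) → ℝ,
      (∀ i, Rv i ∈ Set.Icc (0 : ℝ) 1 ∧ ∃ k : ℤ, Rv i * (N₁ : ℝ) = (k : ℝ)) ∧
      (∑ i, Rv i) = 2 ^ lam * R ∧
      v = nlog (∑ i : Fin (2 ^ lam), dexp (N₁ : ℝ) (EchanN (subch W lam (i : ℕ)) (Rv i) N₁))}

/-- The asymptotic exponent `E_λ(W, R)`, defined recursively;
`E_λ(W,R) = 0` for `R > 1` by convention. -/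
noncomputable def ElamInf : PreChannel → ℕ → ℝ → EReal
  | W, 0, R => Echan W R
  | W, l + 1, R =>
      if 1 < R then 0
      else ((1 / 2 : ℝ) : EReal) *
        sSup {v : EReal | ∃ R₁ ∈ Set.Icc (max 0 (2 * R - 1)) (min 1 (2 * R)),
          v = min (ElamInf W.minus l R₁) (ElamInf W.plus l (2 * R - R₁))}

/-- `V_λ(W) = (Σᵢ √V(Wᵢ))² / 2^λ`. -/
noncomputable def Vlam (W : PreChannel) (lam : ℕ) : ℝ :=
  (∑ i ∈ Finset.range (2 ^ lam), Real.sqrt (disp (subch W lam i))) ^ 2 / 2 ^ lam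

end PreChannel

/-- Binary entropy function (base 2), with `h2 0 = h2 1 = 0`. -/
noncomputable def h2 (x : ℝ) : ℝ := -x * Real.logb 2 x - (1 - x) * Real.logb 2 (1 - x)

/-- Inverse of the binary entropy function, with values in `[0, 1/2]`. -/
noncomputable def h2inv (v : ℝ) : ℝ := Function.invFunOn h2 (Set.Icc 0 (1 / 2)) v

/-- `ε_h(x) = x − x²`. -/
noncomputable def epsh (x : ℝ) : ℝ := x - x ^ 2

/-- `ε_l(x) = x − 1 + h₂(h₂⁻¹(1−x)·[2 − 2 h₂⁻¹(1−x)])`. -/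
noncomputable def epsl (x : ℝ) : ℝ :=
  x - 1 + h2 (h2inv (1 - x) * (2 - 2 * h2inv (1 - x)))

/-- The binary symmetric channel with crossover probability `p`. -/
noncomputable def BSC (p : ℝ) : PreChannel where
  Y := Bool
  fin := inferInstance
  W := fun x y => if y = x then 1 - p else p

/-- The binary erasure channel with erasure probability `δ` (`none` = erasure). -/
noncomputable def BEC (δ : ℝ) : PreChannel where
  Y := Option Bool
  fin := inferInstance
  W := fun x y => match y with
    | none => δ
    | some b => if b = x then 1 - δ else 0

/-- The channel-independent lower bound `Ê_λ(I, R)`. -/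
noncomputable def Ehat : ℕ → ℝ → ℝ → EReal
  | 0, I, R => PreChannel.Echan (BSC (h2inv (1 - I))) R
  | l + 1, I, R =>
      ((1 / 2 : ℝ) : EReal) *
        sInf {w : EReal | ∃ ε ∈ Set.Icc (epsl I) (epsh I),
          w = sSup {v : EReal | ∃ R₁ ∈ Set.Icc (max 0 (2 * R - 1)) (min 1 (2 * R)),
            v = min (Ehat l (I - ε) R₁) (Ehat l (I + ε) (2 * R - R₁))}}

/-- The Gaussian Q-function. -/
noncomputable def gaussQ (u : ℝ) : ℝ :=
  ∫ t in Set.Ioi u, (Real.sqrt (2 * Real.pi))⁻¹ * Real.exp (-t ^ 2 / 2)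

open PreChannel

open Finset

theorem Antitone.sSup_image_eq_of_finite {α β : Type*} [ConditionallyCompleteLinearOrder α]
    [CompleteLattice β] {f : α → β} (hf : Antitone f) {A : Set α} (hfin : A.Finite)
    (hne : A.Nonempty) : sSup (f '' A) = f (sInf A) :=
  le_antisymm (sSup_le <| Set.forall_mem_image.2 fun _ ha => hf (csInf_le hfin.bddBelow ha))
    (le_sSup ⟨_, hne.csInf_mem hfin, rfl⟩)

theorem Finset.sum_range_min_one_max_zero_sub (n : ℕ) {x : ℝ} (h0 : 0 ≤ x) (hn : x ≤ n) :
    ∑ i ∈ range n, min 1 (max 0 (x - i)) = x := by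
  induction n generalizing x with
  | zero => simp [le_antisymm (by simpa using hn) h0]
  | succ n ih =>
    rw [sum_range_succ', Nat.cast_zero, sub_zero, max_eq_right h0]
    push_cast at hn ⊢
    rcases le_or_gt 1 x with hx | hx
    · have hshift : ∀ i ∈ range n, min 1 (max 0 (x - (i + 1 : ℝ))) = min 1 (max 0 (x - 1 - i)) :=
        fun i _ => by rw [sub_sub, add_comm]
      rw [sum_congr rfl hshift, ih (sub_nonneg.2 hx) (by linarith), min_eq_left hx]
      ring
    · have hzero : ∀ i ∈ range n, min 1 (max 0 (x - (i + 1 : ℝ))) = 0 := fun i _ => by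
        rw [max_eq_left (by linarith [i.cast_nonneg (α := ℝ)]), min_eq_right zero_le_one]
      rw [sum_congr rfl hzero, sum_const_zero, min_eq_right hx.le, zero_add]

namespace PreChannel

lemma dexp_nonneg (t : ℝ) (E : EReal) : 0 ≤ dexp t E := by
  unfold dexp
  split_ifs <;> positivity

lemma antitone_nlog : Antitone nlog := by
  intro a b hab
  unfold nlog
  split_ifs with hb ha ha
  · exact le_rfl
  · exact absurd (hab.trans hb) ha
  · exact le_top
  · exact EReal.coe_le_coe_iff.2 (neg_le_neg (Real.log_le_log (not_le.1 ha) hab))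

lemma dexp_mul_nlog {T m : ℝ} (hT : 0 < T) (hm : 0 ≤ m) :
    dexp T (((1 / T : ℝ) : EReal) * nlog m) = m := by
  rcases hm.eq_or_lt with rfl | hm
  · rw [nlog, if_pos le_rfl, EReal.mul_top_of_pos (by exact_mod_cast one_div_pos.2 hT), dexp,
      if_pos rfl]
  · rw [nlog, if_neg hm.not_ge, ← EReal.coe_mul, dexp, if_neg (EReal.coe_ne_top _),
      EReal.toReal_coe, show -T * (1 / T * -Real.log m) = Real.log m by field_simp,
      Real.exp_log hm]

lemma mem_Icc_max_min_iff {R R₁ : ℝ} :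
    R₁ ∈ Set.Icc (max 0 (2 * R - 1)) (min 1 (2 * R)) ↔
      R₁ ∈ Set.Icc 0 1 ∧ 2 * R - R₁ ∈ Set.Icc 0 1 := by
  simp only [Set.mem_Icc, max_le_iff, le_min_iff]
  constructor <;> rintro ⟨⟨_, _⟩, _, _⟩ <;> refine ⟨⟨?_, ?_⟩, ?_, ?_⟩ <;> linarith

def rateTuples (n N₁ : ℕ) (σ : ℝ) : Set (Fin n → ℝ) :=
  {Rv | (∀ i, Rv i ∈ Set.Icc (0 : ℝ) 1 ∧ ∃ k : ℤ, Rv i * N₁ = k) ∧ ∑ i, Rv i = σ}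

lemma rateTuples_finite {N₁ : ℕ} (hN₁ : 1 ≤ N₁) (n : ℕ) (σ : ℝ) :
    (rateTuples n N₁ σ).Finite := by
  have hN : (0 : ℝ) < N₁ := by exact_mod_cast hN₁
  refine (Set.Finite.pi (t := fun _ : Fin n => (fun k : ℤ => (k : ℝ) / N₁) '' Set.Icc 0 N₁)
    fun _ => (Set.finite_Icc _ _).image _).subset ?_
  rintro Rv ⟨hRv, -⟩ i -
  obtain ⟨⟨h0, h1⟩, k, hk⟩ := hRv i
  have hk0 : (0 : ℝ) ≤ k := hk ▸ mul_nonneg h0 hN.le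
  have hkN : (k : ℝ) ≤ N₁ := hk ▸ mul_le_of_le_one_left hN.le h1
  refine ⟨k, ⟨by exact_mod_cast hk0, by exact_mod_cast hkN⟩, ?_⟩
  change (k : ℝ) / N₁ = Rv i
  rw [← hk, mul_div_cancel_right₀ _ hN.ne']

lemma rateTuples_nonempty {n N₁ : ℕ} {σ : ℝ} (h0 : 0 ≤ σ) (hn : σ ≤ n) {K : ℤ}
    (hK : σ * N₁ = K) : (rateTuples n N₁ σ).Nonempty := by
  have hN : (0 : ℝ) ≤ N₁ := N₁.cast_nonneg
  -- greedy tuple: rate `1` while possible, then the remainder, then `0`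
  refine ⟨fun i => min 1 (max 0 (σ - i)),
    fun i => ⟨⟨le_min zero_le_one (le_max_left _ _), min_le_left _ _⟩, ?_⟩, ?_⟩
  · refine ⟨min N₁ (max 0 (K - i * N₁)), ?_⟩
    rw [min_mul_of_nonneg _ _ hN, max_mul_of_nonneg _ _ hN, sub_mul, hK]
    push_cast
    ring_nf
  · rw [Fin.sum_univ_eq_sum_range (fun j => min 1 (max 0 (σ - j)))]
    exact sum_range_min_one_max_zero_sub n h0 hn

lemma sum_mem_Icc_of_mem_rateTuples {n N₁ : ℕ} {σ : ℝ} {Rv : Fin n → ℝ}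
    (h : Rv ∈ rateTuples n N₁ σ) : σ ∈ Set.Icc 0 (n : ℝ) ∧ ∃ k : ℤ, σ * N₁ = k := by
  obtain ⟨hRv, rfl⟩ := h
  choose hI k hk using hRv
  refine ⟨⟨sum_nonneg fun i _ => (hI i).1, ?_⟩, ∑ i, k i, ?_⟩
  · simpa using sum_le_sum fun i (_ : i ∈ univ) => (hI i).2
  · push_cast
    rw [sum_mul]
    exact sum_congr rfl fun i _ => hk i

section Halves

variable {l : ℕ}

def lowIdx (l : ℕ) (i : Fin (2 ^ l)) : Fin (2 ^ (l + 1)) :=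
  Fin.cast (Nat.two_pow_succ l).symm (Fin.castAdd _ i)

def highIdx (l : ℕ) (i : Fin (2 ^ l)) : Fin (2 ^ (l + 1)) :=
  Fin.cast (Nat.two_pow_succ l).symm (Fin.natAdd _ i)

def appendHalves {α : Type*} (a b : Fin (2 ^ l) → α) : Fin (2 ^ (l + 1)) → α :=
  Fin.append a b ∘ Fin.cast (Nat.two_pow_succ l)

lemma appendHalves_lowIdx {α : Type*} (a b : Fin (2 ^ l) → α) (i : Fin (2 ^ l)) :
    appendHalves a b (lowIdx l i) = a i := by
  simp only [appendHalves, lowIdx, Function.comp_apply, Fin.cast_cast, Fin.cast_eq_self,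
    Fin.append_left]

lemma appendHalves_highIdx {α : Type*} (a b : Fin (2 ^ l) → α) (i : Fin (2 ^ l)) :
    appendHalves a b (highIdx l i) = b i := by
  simp only [appendHalves, highIdx, Function.comp_apply, Fin.cast_cast, Fin.cast_eq_self,
    Fin.append_right]

lemma sum_fin_two_pow_succ {M : Type*} [AddCommMonoid M] (f : Fin (2 ^ (l + 1)) → M) :
    ∑ i, f i = ∑ i, f (lowIdx l i) + ∑ i, f (highIdx l i) := by
  rw [← Fin.sum_congr' f (Nat.two_pow_succ l).symm, Fin.sum_univ_add]
  rfl

lemma forall_fin_two_pow_succ {P : Fin (2 ^ (l + 1)) → Prop} (hlo : ∀ i, P (lowIdx l i))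
    (hhi : ∀ i, P (highIdx l i)) (j : Fin (2 ^ (l + 1))) : P j := by
  have hj : j = Fin.cast (Nat.two_pow_succ l).symm (Fin.cast (Nat.two_pow_succ l) j) := by simp
  rw [hj]
  exact Fin.addCases (motive := fun k => P (Fin.cast _ k)) hlo hhi _

lemma appendHalves_mem_rateTuples {N₁ : ℕ} {σ τ : ℝ} {a b : Fin (2 ^ l) → ℝ}
    (ha : a ∈ rateTuples (2 ^ l) N₁ σ) (hb : b ∈ rateTuples (2 ^ l) N₁ τ) :
    appendHalves a b ∈ rateTuples (2 ^ (l + 1)) N₁ (σ + τ) := by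
  refine ⟨forall_fin_two_pow_succ (fun i => ?_) (fun i => ?_), ?_⟩
  · rw [appendHalves_lowIdx]
    exact ha.1 i
  · rw [appendHalves_highIdx]
    exact hb.1 i
  · simp only [sum_fin_two_pow_succ, appendHalves_lowIdx, appendHalves_highIdx, ha.2, hb.2]

lemma subch_succ_lowIdx (W : PreChannel) (i : Fin (2 ^ l)) :
    subch W (l + 1) (lowIdx l i) = subch W.minus l i := by
  simp [subch, lowIdx, Nat.div_eq_of_lt i.isLt, Nat.mod_eq_of_lt i.isLt]

lemma subch_succ_highIdx (W : PreChannel) (i : Fin (2 ^ l)) :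
    subch W (l + 1) (highIdx l i) = subch W.plus l i := by
  simp [subch, highIdx, Nat.div_eq_of_lt i.isLt, Nat.mod_eq_of_lt i.isLt]

end Halves

noncomputable def errorSum (V : PreChannel) (l N₁ : ℕ) (Rv : Fin (2 ^ l) → ℝ) : ℝ :=
  ∑ i : Fin (2 ^ l), dexp N₁ (EchanN (subch V l i) (Rv i) N₁)

noncomputable def minErrorSum (V : PreChannel) (l N₁ : ℕ) (ρ : ℝ) : ℝ :=
  sInf (errorSum V l N₁ '' rateTuples (2 ^ l) N₁ (2 ^ l * ρ))

lemma errorSum_nonneg (V : PreChannel) (l N₁ : ℕ) (Rv : Fin (2 ^ l) → ℝ) :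
    0 ≤ errorSum V l N₁ Rv :=
  sum_nonneg fun _ _ => dexp_nonneg _ _

lemma errorSum_succ (W : PreChannel) (l N₁ : ℕ) (Rv : Fin (2 ^ (l + 1)) → ℝ) :
    errorSum W (l + 1) N₁ Rv =
      errorSum W.minus l N₁ (Rv ∘ lowIdx l) + errorSum W.plus l N₁ (Rv ∘ highIdx l) := by
  simp only [errorSum, sum_fin_two_pow_succ, subch_succ_lowIdx, subch_succ_highIdx,
    Function.comp_apply]

lemma ElamN_eq_mul_sSup (V : PreChannel) (l N₁ : ℕ) (ρ : ℝ) :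
    ElamN V l N₁ ρ = ((1 / ((N₁ : ℝ) * 2 ^ l) : ℝ) : EReal) *
      sSup (nlog '' (errorSum V l N₁ '' rateTuples (2 ^ l) N₁ (2 ^ l * ρ))) := by
  rw [Set.image_image]
  unfold ElamN
  congr 2
  ext v
  simp only [Set.mem_ofPred_eq, Set.mem_image, rateTuples, errorSum, and_assoc, eq_comm]

lemma rateTuples_two_pow_nonempty {l N₁ : ℕ} {ρ : ℝ} (hρ : ρ ∈ Set.Icc 0 1)
    (hk : ∃ k : ℤ, ρ * N₁ * 2 ^ l = k) :
    (rateTuples (2 ^ l) N₁ (2 ^ l * ρ)).Nonempty := by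
  obtain ⟨K, hK⟩ := hk
  exact rateTuples_nonempty (by positivity [hρ.1])
    (by push_cast; exact mul_le_of_le_one_right (by positivity) hρ.2) (K := K) (by rw [← hK]; ring)

section MinErrorSum

variable (V : PreChannel) {l N₁ : ℕ} (hN₁ : 1 ≤ N₁) {ρ : ℝ}
include hN₁

lemma minErrorSum_le {Rv : Fin (2 ^ l) → ℝ} (hRv : Rv ∈ rateTuples (2 ^ l) N₁ (2 ^ l * ρ)) :
    minErrorSum V l N₁ ρ ≤ errorSum V l N₁ Rv :=
  csInf_le ((rateTuples_finite hN₁ _ _).image _).bddBelow ⟨Rv, hRv, rfl⟩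

variable (hρ : ρ ∈ Set.Icc 0 1) (hk : ∃ k : ℤ, ρ * N₁ * 2 ^ l = k)
include hρ hk

lemma exists_errorSum_eq_minErrorSum :
    ∃ Rv ∈ rateTuples (2 ^ l) N₁ (2 ^ l * ρ), errorSum V l N₁ Rv = minErrorSum V l N₁ ρ :=
  ((rateTuples_two_pow_nonempty hρ hk).image _).csInf_mem
    ((rateTuples_finite hN₁ _ _).image _)

lemma dexp_ElamN : dexp (N₁ * 2 ^ l) (ElamN V l N₁ ρ) = minErrorSum V l N₁ ρ := by
  have hT : (0 : ℝ) < N₁ * 2 ^ l := by positivity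
  rw [ElamN_eq_mul_sSup, antitone_nlog.sSup_image_eq_of_finite
    ((rateTuples_finite hN₁ _ _).image _) ((rateTuples_two_pow_nonempty hρ hk).image _)]
  exact dexp_mul_nlog hT (Real.sInf_nonneg (Set.forall_mem_image.2 fun _ _ =>
    errorSum_nonneg _ _ _ _))

end MinErrorSum

lemma exists_dexp_ElamN_add_le_errorSum (W : PreChannel) {l N₁ : ℕ} (hN₁ : 1 ≤ N₁) {R : ℝ}
    {Rv : Fin (2 ^ (l + 1)) → ℝ} (hRv : Rv ∈ rateTuples (2 ^ (l + 1)) N₁ (2 ^ (l + 1) * R)) :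
    ∃ R₁ ∈ Set.Icc (max 0 (2 * R - 1)) (min 1 (2 * R)), (∃ k : ℤ, R₁ * N₁ * 2 ^ l = k) ∧
      dexp (N₁ * 2 ^ l) (ElamN W.minus l N₁ R₁) +
        dexp (N₁ * 2 ^ l) (ElamN W.plus l N₁ (2 * R - R₁)) ≤ errorSum W (l + 1) N₁ Rv := by
  have h2l : (0 : ℝ) < 2 ^ l := by positivity
  have hunit : ∀ x : ℝ, 0 ≤ 2 ^ l * x → 2 ^ l * x ≤ 2 ^ l → x ∈ Set.Icc 0 1 := fun x h0 h1 =>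
    ⟨(mul_nonneg_iff_of_pos_left h2l).1 h0, (mul_le_iff_le_one_right h2l).1 h1⟩
  set R₁ := (∑ i, Rv (lowIdx l i)) / 2 ^ l with hR₁
  have hsum : ∑ i, Rv (lowIdx l i) + ∑ i, Rv (highIdx l i) = 2 ^ l * 2 * R := by
    rw [← sum_fin_two_pow_succ, hRv.2, pow_succ]
  have hlo : Rv ∘ lowIdx l ∈ rateTuples (2 ^ l) N₁ (2 ^ l * R₁) :=
    ⟨fun i => hRv.1 _, by rw [hR₁, mul_div_cancel₀ _ h2l.ne']; rfl⟩
  have hhi : Rv ∘ highIdx l ∈ rateTuples (2 ^ l) N₁ (2 ^ l * (2 * R - R₁)) := by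
    refine ⟨fun i => hRv.1 _, ?_⟩
    rw [mul_sub, hR₁, mul_div_cancel₀ _ h2l.ne']
    simp only [Function.comp_apply]
    linarith
  obtain ⟨⟨hlo0, hlo1⟩, k₁, hk₁⟩ := sum_mem_Icc_of_mem_rateTuples hlo
  obtain ⟨⟨hhi0, hhi1⟩, k₂, hk₂⟩ := sum_mem_Icc_of_mem_rateTuples hhi
  push_cast at hlo1 hhi1
  have hR₁k : ∃ k : ℤ, R₁ * N₁ * 2 ^ l = k := ⟨k₁, by rw [← hk₁]; ring⟩
  have hR₂k : ∃ k : ℤ, (2 * R - R₁) * N₁ * 2 ^ l = k := ⟨k₂, by rw [← hk₂]; ring⟩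
  have hR₁01 := hunit _ hlo0 hlo1
  have hR₂01 := hunit _ hhi0 hhi1
  refine ⟨R₁, mem_Icc_max_min_iff.2 ⟨hR₁01, hR₂01⟩, hR₁k, ?_⟩
  rw [dexp_ElamN W.minus hN₁ hR₁01 hR₁k, dexp_ElamN W.plus hN₁ hR₂01 hR₂k, errorSum_succ]
  exact add_le_add (minErrorSum_le _ hN₁ hlo) (minErrorSum_le _ hN₁ hhi)

lemma exists_errorSum_eq_dexp_ElamN_add (W : PreChannel) {l N₁ : ℕ} (hN₁ : 1 ≤ N₁) {R R₁ : ℝ}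
    (hInt : ∃ k : ℤ, R * N₁ * 2 ^ (l + 1) = k)
    (hR₁ : R₁ ∈ Set.Icc (max 0 (2 * R - 1)) (min 1 (2 * R)))
    (hk₁ : ∃ k : ℤ, R₁ * N₁ * 2 ^ l = k) :
    ∃ Rv ∈ rateTuples (2 ^ (l + 1)) N₁ (2 ^ (l + 1) * R), errorSum W (l + 1) N₁ Rv =
      dexp (N₁ * 2 ^ l) (ElamN W.minus l N₁ R₁) +
        dexp (N₁ * 2 ^ l) (ElamN W.plus l N₁ (2 * R - R₁)) := by
  obtain ⟨hR₁01, hR₂01⟩ := mem_Icc_max_min_iff.1 hR₁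
  have hk₂ : ∃ k : ℤ, (2 * R - R₁) * N₁ * 2 ^ l = k := by
    obtain ⟨K, hK⟩ := hInt
    obtain ⟨K₁, hK₁⟩ := hk₁
    exact ⟨K - K₁, by push_cast; rw [← hK, ← hK₁]; ring⟩
  obtain ⟨Rm, hRm, hm⟩ := exists_errorSum_eq_minErrorSum W.minus hN₁ hR₁01 hk₁
  obtain ⟨Rp, hRp, hp⟩ := exists_errorSum_eq_minErrorSum W.plus hN₁ hR₂01 hk₂
  refine ⟨appendHalves Rm Rp, ?_, ?_⟩
  · convert appendHalves_mem_rateTuples hRm hRp using 2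
    ring
  · rw [dexp_ElamN W.minus hN₁ hR₁01 hk₁, dexp_ElamN W.plus hN₁ hR₂01 hk₂, ← hm, ← hp,
      errorSum_succ]
    congr 2 <;> ext i
    exacts [appendHalves_lowIdx Rm Rp i, appendHalves_highIdx Rm Rp i]

end PreChannel

theorem stmt0_general (W : PreChannel) (lam N₁ : ℕ) (hlam : 1 ≤ lam)
    (hN₁ : 1 ≤ N₁) (R : ℝ)
    (hInt : ∃ k : ℤ, R * (N₁ : ℝ) * 2 ^ lam = (k : ℝ)) :
    ElamN W lam N₁ R =
      ((1 / ((N₁ : ℝ) * 2 ^ lam) : ℝ) : EReal) *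
        sSup {v : EReal | ∃ R₁ ∈ Set.Icc (max 0 (2 * R - 1)) (min 1 (2 * R)),
          (∃ k : ℤ, R₁ * (N₁ : ℝ) * 2 ^ (lam - 1) = (k : ℝ)) ∧
          v = nlog (dexp ((N₁ : ℝ) * 2 ^ (lam - 1)) (ElamN W.minus (lam - 1) N₁ R₁) +
              dexp ((N₁ : ℝ) * 2 ^ (lam - 1)) (ElamN W.plus (lam - 1) N₁ (2 * R - R₁)))} := by
  obtain ⟨l, rfl⟩ : ∃ l, lam = l + 1 := ⟨lam - 1, by omega⟩
  rw [Nat.add_sub_cancel, ElamN_eq_mul_sSup]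
  congr 1
  apply le_antisymm
  · refine sSup_le ?_
    rintro _ ⟨_, ⟨Rv, hRv, rfl⟩, rfl⟩
    obtain ⟨R₁, hR₁, hk₁, hle⟩ := exists_dexp_ElamN_add_le_errorSum W hN₁ hRv
    exact (antitone_nlog hle).trans (le_sSup ⟨R₁, hR₁, hk₁, rfl⟩)
  · refine sSup_le ?_
    rintro _ ⟨R₁, hR₁, hk₁, rfl⟩
    obtain ⟨Rv, hRv, heq⟩ := exists_errorSum_eq_dexp_ElamN_add W hN₁ hInt hR₁ hk₁
    exact le_sSup ⟨_, ⟨Rv, hRv, rfl⟩, by rw [heq]⟩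

/-- recursion for the finite-blocklength exponent. -/
theorem stmt0 (W : PreChannel) (hW : W.IsBMS) (lam N₁ : ℕ) (hlam : 1 ≤ lam)
    (hN₁ : 1 ≤ N₁) (R : ℝ) (hR : R ∈ Set.Icc (0 : ℝ) 1)
    (hInt : ∃ k : ℤ, R * (N₁ : ℝ) * 2 ^ lam = (k : ℝ)) :
    ElamN W lam N₁ R =
      ((1 / ((N₁ : ℝ) * 2 ^ lam) : ℝ) : EReal) *
        sSup {v : EReal | ∃ R₁ ∈ Set.Icc (max 0 (2 * R - 1)) (min 1 (2 * R)),
          (∃ k : ℤ, R₁ * (N₁ : ℝ) * 2 ^ (lam - 1) = (k : ℝ)) ∧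
          v = nlog (dexp ((N₁ : ℝ) * 2 ^ (lam - 1)) (ElamN W.minus (lam - 1) N₁ R₁) +
              dexp ((N₁ : ℝ) * 2 ^ (lam - 1)) (ElamN W.plus (lam - 1) N₁ (2 * R - R₁)))} :=
  stmt0_general W lam N₁ hlam hN₁ R hInt
end

section
/- Let W be a BMS channel with Z(W) > 0 and let λ ≥ 0 be an integer. Then the function R ↦ E_λ(W,R) is convex on (0,∞). -/
open scoped BigOperators

open PreChannel

/-!
Induction on `λ` shows that each `E_λ(W, ·)` is `+∞` at rate `0` and, on positive rates, a real
function that is nonnegative, convex, and zero from rate `1` on. For `λ = 0` the exponent is a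
pointwise supremum of affine functions of the rate; these are bounded above because `Z(W) > 0`.
In the recursion step, both children are nonincreasing and continuous. Hence the max-min over
splits `R₁ + R₂ = 2R` equals the min-max `inf_{R₁ + R₂ = 2R} max (E⁻(R₁), E⁺(R₂))`; this follows
from connectedness of the interval of admissible `R₁`. A min-max of convex functions over splits
is convex: convex combinations of near-optimal splits for two rates give a split for the combined
rate.
-/

open Set

noncomputable def exponentSup (a : ℝ → ℝ) (S : Set ℝ) (R : ℝ) : ℝ :=
  sSup {x | ∃ ρ ∈ S, x = a ρ - ρ * R * Real.log 2}

section exponentSup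

variable {a : ℝ → ℝ} {S : Set ℝ} {R ρ : ℝ}

theorem bddAbove_exponentSup_set (hS : S ⊆ Ici 0) (ha : BddAbove (a '' S)) (hR : 0 ≤ R) :
    BddAbove {x | ∃ ρ ∈ S, x = a ρ - ρ * R * Real.log 2} := by
  obtain ⟨K, hK⟩ := ha
  refine ⟨K, ?_⟩
  rintro _ ⟨ρ, hρ, rfl⟩
  have : 0 ≤ ρ * R * Real.log 2 := by
    have := (hS hρ).out
    positivity
  linarith [hK ⟨ρ, hρ, rfl⟩]

theorem le_exponentSup (hS : S ⊆ Ici 0) (ha : BddAbove (a '' S)) (hR : 0 ≤ R) (hρ : ρ ∈ S) :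
    a ρ - ρ * R * Real.log 2 ≤ exponentSup a S R :=
  le_csSup (bddAbove_exponentSup_set hS ha hR) ⟨ρ, hρ, rfl⟩

theorem exponentSup_nonpos (hS : S.Nonempty) (hS₀ : S ⊆ Ici 0)
    (ha : ∀ ρ ∈ S, a ρ ≤ ρ * Real.log 2) (hR : 1 ≤ R) : exponentSup a S R ≤ 0 := by
  obtain ⟨ρ₀, hρ₀⟩ := hS
  refine csSup_le ⟨_, ρ₀, hρ₀, rfl⟩ ?_
  rintro _ ⟨ρ, hρ, rfl⟩
  have := mul_le_mul_of_nonneg_left hR (mul_nonneg (hS₀ hρ).out (Real.log_nonneg one_le_two))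
  nlinarith [ha ρ hρ]

theorem convexOn_exponentSup (hS : S.Nonempty) (hS₀ : S ⊆ Ici 0) (ha : BddAbove (a '' S)) :
    ConvexOn ℝ (Ici 0) (exponentSup a S) := by
  refine ⟨convex_Ici 0, fun x hx y hy s t hs ht hst => ?_⟩
  obtain ⟨ρ₀, hρ₀⟩ := hS
  refine csSup_le ⟨_, ρ₀, hρ₀, rfl⟩ ?_
  rintro _ ⟨ρ, hρ, rfl⟩
  calc a ρ - ρ * (s • x + t • y) * Real.log 2
      = s • (a ρ - ρ * x * Real.log 2) + t • (a ρ - ρ * y * Real.log 2) := by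
        simp only [smul_eq_mul]; linear_combination (-a ρ) * hst
    _ ≤ s • exponentSup a S x + t • exponentSup a S y := by
        gcongr
        · exact le_exponentSup hS₀ ha hx hρ
        · exact le_exponentSup hS₀ ha hy hρ

end exponentSup

structure IsExponentProfile (φ : ℝ → ℝ) : Prop where
  nonneg : ∀ R, 0 < R → 0 ≤ φ R
  eq_zero : ∀ R, 1 ≤ R → φ R = 0
  convexOn : ConvexOn ℝ (Ioi 0) φ

structure HasExponentProfile (f : ℝ → EReal) (φ : ℝ → ℝ) : Prop where
  profile : IsExponentProfile φ
  apply_zero : f 0 = ⊤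
  apply_of_pos : ∀ R, 0 < R → f R = φ R

noncomputable def infMaxSplit (φ ψ : ℝ → ℝ) (R : ℝ) : ℝ :=
  ⨅ x : Ioo 0 (2 * R), max (φ x) (ψ (2 * R - x))

noncomputable def supMinSplit (G H : ℝ → EReal) (R : ℝ) : EReal :=
  sSup {v | ∃ R₁ ∈ Icc (max 0 (2 * R - 1)) (min 1 (2 * R)), v = min (G R₁) (H (2 * R - R₁))}

/-- `ElamInf W (l + 1)` is `splitStep (ElamInf W.minus l) (ElamInf W.plus l)` by definition. -/
noncomputable def splitStep (G H : ℝ → EReal) (R : ℝ) : EReal :=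
  if 1 < R then 0 else ((1 / 2 : ℝ) : EReal) * supMinSplit G H R

theorem min_le_supMinSplit {G H : ℝ → EReal} {R R₁ : ℝ}
    (h : R₁ ∈ Icc (max 0 (2 * R - 1)) (min 1 (2 * R))) :
    min (G R₁) (H (2 * R - R₁)) ≤ supMinSplit G H R :=
  le_sSup ⟨R₁, h, rfl⟩

namespace IsExponentProfile

variable {φ ψ : ℝ → ℝ} {R x : ℝ}

theorem antitoneOn (hφ : IsExponentProfile φ) : AntitoneOn φ (Ioi 0) := by
  intro x hx y hy hxy
  have hyz : y < max y 1 + 1 := by linarith [le_max_left y 1]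
  refine hφ.convexOn.le_left_of_right_le'' hx (hy.out.trans hyz) hxy hyz ?_
  rw [hφ.eq_zero _ (by linarith [le_max_right y 1])]
  exact hφ.nonneg y hy

theorem continuousOn (hφ : IsExponentProfile φ) : ContinuousOn φ (Ioi 0) :=
  hφ.convexOn.continuousOn isOpen_Ioi

theorem bddBelow_range_max (hφ : IsExponentProfile φ) :
    BddBelow (range fun x : Ioo 0 (2 * R) => max (φ x) (ψ (2 * R - x))) :=
  ⟨0, by rintro _ ⟨x, rfl⟩; exact (hφ.nonneg x x.2.1).trans (le_max_left _ _)⟩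

theorem infMaxSplit_nonneg (hφ : IsExponentProfile φ) : 0 ≤ infMaxSplit φ ψ R :=
  Real.iInf_nonneg fun x => (hφ.nonneg x x.2.1).trans (le_max_left _ _)

theorem infMaxSplit_le (hφ : IsExponentProfile φ) (hx : x ∈ Ioo 0 (2 * R)) :
    infMaxSplit φ ψ R ≤ max (φ x) (ψ (2 * R - x)) :=
  ciInf_le hφ.bddBelow_range_max ⟨x, hx⟩

theorem infMaxSplit_eq_zero (hφ : IsExponentProfile φ) (hψ : IsExponentProfile ψ)
    (hR : 1 ≤ R) : infMaxSplit φ ψ R = 0 := by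
  refine le_antisymm ?_ hφ.infMaxSplit_nonneg
  have := hφ.infMaxSplit_le (ψ := ψ) (show (1 : ℝ) ∈ Ioo 0 (2 * R) by constructor <;> linarith)
  rwa [hφ.eq_zero 1 le_rfl, hψ.eq_zero _ (by linarith), max_self] at this

theorem convexOn_infMaxSplit (hφ : IsExponentProfile φ) (hψ : IsExponentProfile ψ) :
    ConvexOn ℝ (Ioi 0) (infMaxSplit φ ψ) := by
  refine ⟨convex_Ioi 0, fun Ra hRa Rb hRb a b ha hb hab => ?_⟩
  have nearly_optimal : ∀ {R : ℝ}, 0 < R → ∀ ε > 0, ∃ y ∈ Ioo 0 (2 * R),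
      max (φ y) (ψ (2 * R - y)) < infMaxSplit φ ψ R + ε := fun {R} hR ε hε => by
    have : Nonempty (Ioo 0 (2 * R)) := ⟨⟨R, by constructor <;> linarith⟩⟩
    obtain ⟨⟨y, hy⟩, hlt⟩ := exists_lt_of_ciInf_lt (lt_add_of_pos_right (infMaxSplit φ ψ R) hε)
    exact ⟨y, hy, hlt⟩
  refine le_of_forall_pos_le_add fun ε hε => ?_
  obtain ⟨xa, hxa, hxa_lt⟩ := nearly_optimal hRa ε hε
  obtain ⟨xb, hxb, hxb_lt⟩ := nearly_optimal hRb ε hε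
  have hsplit : 2 * (a • Ra + b • Rb) - (a • xa + b • xb) =
      a • (2 * Ra - xa) + b • (2 * Rb - xb) := by
    simp only [smul_eq_mul]; ring
  have hx₁ := convex_Ioi (0 : ℝ) hxa.1 hxb.1 ha hb hab
  have hx₂ := convex_Ioi (0 : ℝ) (sub_pos.2 hxa.2) (sub_pos.2 hxb.2) ha hb hab
  have hx : a • xa + b • xb ∈ Ioo 0 (2 * (a • Ra + b • Rb)) :=
    ⟨hx₁, sub_pos.1 (hsplit ▸ hx₂)⟩
  calc infMaxSplit φ ψ (a • Ra + b • Rb)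
      ≤ max (φ (a • xa + b • xb)) (ψ (2 * (a • Ra + b • Rb) - (a • xa + b • xb))) :=
        hφ.infMaxSplit_le hx
    _ ≤ a • max (φ xa) (ψ (2 * Ra - xa)) + b • max (φ xb) (ψ (2 * Rb - xb)) := by
        rw [hsplit]
        refine max_le ((hφ.convexOn.2 hxa.1 hxb.1 ha hb hab).trans ?_)
          ((hψ.convexOn.2 (sub_pos.2 hxa.2) (sub_pos.2 hxb.2) ha hb hab).trans ?_) <;>
        gcongr <;> simp
    _ ≤ a • (infMaxSplit φ ψ Ra + ε) + b • (infMaxSplit φ ψ Rb + ε) := by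
        gcongr
    _ = a • infMaxSplit φ ψ Ra + b • infMaxSplit φ ψ Rb + ε := by
        simp only [smul_eq_mul]; linear_combination ε * hab

theorem infMaxSplit_div_two (hφ : IsExponentProfile φ) (hψ : IsExponentProfile ψ) :
    IsExponentProfile (fun R => infMaxSplit φ ψ R / 2) where
  nonneg _ _ := div_nonneg hφ.infMaxSplit_nonneg zero_le_two
  eq_zero _ hR := by rw [hφ.infMaxSplit_eq_zero hψ hR, zero_div]
  convexOn := by
    simpa [div_eq_inv_mul] using (hφ.convexOn_infMaxSplit hψ).smul (c := (2 : ℝ)⁻¹) (by norm_num)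

end IsExponentProfile

namespace HasExponentProfile

variable {f G H : ℝ → EReal} {φ ψ : ℝ → ℝ} {R x c : ℝ}

theorem antitoneOn (hf : HasExponentProfile f φ) : AntitoneOn f (Ici 0) := by
  intro x hx y hy hxy
  rcases hx.out.eq_or_lt with rfl | hx₀
  · rw [hf.apply_zero]
    exact le_top
  · rw [hf.apply_of_pos x hx₀, hf.apply_of_pos y (hx₀.trans_le hxy), EReal.coe_le_coe_iff]
    exact hf.profile.antitoneOn hx₀ (hx₀.trans_le hxy) hxy

theorem pos_and_lt_of_lt (hf : HasExponentProfile f φ) (hx : 0 ≤ x) (h : f x < c) :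
    0 < x ∧ φ x < c := by
  rcases hx.eq_or_lt with rfl | hx₀
  · simp [hf.apply_zero] at h
  · rw [hf.apply_of_pos x hx₀, EReal.coe_lt_coe_iff] at h
    exact ⟨hx₀, h⟩

theorem supMinSplit_le (hG : HasExponentProfile G φ) (hH : HasExponentProfile H ψ)
    (hR : 0 < R) : supMinSplit G H R ≤ infMaxSplit φ ψ R := by
  have : Nonempty (Ioo 0 (2 * R)) := ⟨⟨R, by constructor <;> linarith⟩⟩
  rw [infMaxSplit, Monotone.map_ciInf_of_continuousAt continuous_coe_real_ereal.continuousAt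
    EReal.coe_strictMono.monotone hG.profile.bddBelow_range_max]
  refine sSup_le ?_
  rintro _ ⟨R₁, hR₁, rfl⟩
  refine le_iInf fun ⟨x, hx⟩ => ?_
  have hR₁₀ : 0 ≤ R₁ := (le_max_left _ _).trans hR₁.1
  rcases le_total x R₁ with hxR₁ | hR₁x
  · calc min (G R₁) (H (2 * R - R₁)) ≤ G x :=
          (min_le_left _ _).trans (hG.antitoneOn hx.1.le hR₁₀ hxR₁)
      _ ≤ _ := by rw [hG.apply_of_pos x hx.1]; exact EReal.coe_le_coe_iff.2 (le_max_left _ _)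
  · have hx' : 0 < 2 * R - x := sub_pos.2 hx.2
    calc min (G R₁) (H (2 * R - R₁)) ≤ H (2 * R - x) :=
          (min_le_right _ _).trans (hH.antitoneOn hx'.le
            (sub_nonneg.2 (hR₁.2.trans (min_le_right _ _))) (by linarith))
      _ ≤ _ := by rw [hH.apply_of_pos _ hx']; exact EReal.coe_le_coe_iff.2 (le_max_right _ _)

theorem pos_and_lt_or_pos_and_lt (hG : HasExponentProfile G φ) (hH : HasExponentProfile H ψ)
    (hlt : supMinSplit G H R < c) {R₁ : ℝ} (hR₁ : R₁ ∈ Icc (max 0 (2 * R - 1)) (min 1 (2 * R))) :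
    (0 < R₁ ∧ φ R₁ < c) ∨ (0 < 2 * R - R₁ ∧ ψ (2 * R - R₁) < c) :=
  (min_lt_iff.1 ((min_le_supMinSplit hR₁).trans_lt hlt)).imp
    (hG.pos_and_lt_of_lt ((le_max_left _ _).trans hR₁.1))
    (hH.pos_and_lt_of_lt (sub_nonneg.2 (hR₁.2.trans (min_le_right _ _))))

theorem le_supMinSplit (hG : HasExponentProfile G φ) (hH : HasExponentProfile H ψ)
    (hR₀ : 0 < R) (hR₁ : R ≤ 1) : (infMaxSplit φ ψ R : EReal) ≤ supMinSplit G H R := by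
  set N := infMaxSplit φ ψ R
  by_contra! hlt
  set I := Icc (max 0 (2 * R - 1)) (min 1 (2 * R))
  have hR : R ∈ I := ⟨max_le hR₀.le (by linarith), le_min hR₁ (by linarith)⟩
  have hN : 0 < N := by
    rcases pos_and_lt_or_pos_and_lt hG hH hlt hR with h | h
    · exact (hG.profile.nonneg _ h.1).trans_lt h.2
    · exact (hH.profile.nonneg _ h.1).trans_lt h.2
  -- `I` is covered by the open sets where the first, resp. second, part of the split is `< N`;
  -- its right end lies in `u` and its left end in `v`, so by connectedness some `R₁` lies in
  -- both, which contradicts the definition of `N`.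
  set u := Ioi 0 ∩ φ ⁻¹' Iio N
  set v := (fun x => 2 * R - x) ⁻¹' (Ioi 0 ∩ ψ ⁻¹' Iio N)
  have hu : IsOpen u := hG.profile.continuousOn.isOpen_inter_preimage isOpen_Ioi isOpen_Iio
  have hv : IsOpen v := (hH.profile.continuousOn.isOpen_inter_preimage isOpen_Ioi
    isOpen_Iio).preimage (continuous_const.sub continuous_id)
  have hcover : I ⊆ u ∪ v := fun R₁ h => pos_and_lt_or_pos_and_lt hG hH hlt h
  have hhi : min 1 (2 * R) ∈ I ∩ u := by
    refine ⟨⟨hR.1.trans hR.2, le_rfl⟩, ?_⟩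
    rcases min_choice 1 (2 * R) with h | h
    · rw [h]
      exact ⟨mem_Ioi.2 one_pos, by simp [hG.profile.eq_zero 1 le_rfl, hN]⟩
    · refine (hcover ⟨hR.1.trans hR.2, le_rfl⟩).resolve_right fun hv' => ?_
      simpa [h] using hv'.1
  have hlo : max 0 (2 * R - 1) ∈ I ∩ v := by
    refine ⟨⟨le_rfl, hR.1.trans hR.2⟩, ?_⟩
    rcases max_choice 0 (2 * R - 1) with h | h
    · refine (hcover ⟨le_rfl, hR.1.trans hR.2⟩).resolve_left fun hu' => ?_
      simpa [h] using hu'.1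
    · rw [h]
      exact ⟨by simp, by simp [hH.profile.eq_zero 1 le_rfl, hN]⟩
  obtain ⟨x, -, hxu, hxv⟩ := isPreconnected_Icc u v hu hv hcover ⟨_, hhi⟩ ⟨_, hlo⟩
  exact (hG.profile.infMaxSplit_le (ψ := ψ) ⟨hxu.1, sub_pos.1 hxv.1⟩).not_gt (max_lt hxu.2 hxv.2)

theorem splitStep (hG : HasExponentProfile G φ) (hH : HasExponentProfile H ψ) :
    HasExponentProfile (splitStep G H) (fun R => infMaxSplit φ ψ R / 2) where
  profile := hG.profile.infMaxSplit_div_two hH.profile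
  apply_zero := by
    have : supMinSplit G H 0 = ⊤ := top_le_iff.1 <| by
      simpa [hG.apply_zero, hH.apply_zero] using
        min_le_supMinSplit (G := G) (H := H) (R := 0) (R₁ := 0) (by norm_num)
    simp [_root_.splitStep, this, EReal.coe_mul_top_of_pos]
  apply_of_pos R hR := by
    rw [_root_.splitStep]
    split_ifs with h1
    · simp [hG.profile.infMaxSplit_eq_zero hH.profile h1.le]
    · rw [le_antisymm (hG.supMinSplit_le hH hR) (hG.le_supMinSplit hH hR (not_lt.1 h1)),
        ← EReal.coe_mul, one_div_mul_eq_div]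

end HasExponentProfile

theorem add_div_two_rpow_le_rpow_mean {a b p : ℝ} (ha : 0 ≤ a) (hb : 0 ≤ b) (hp : 1 ≤ p) :
    (a + b) / 2 ^ p ≤ (1 / 2 * (a ^ (1 / p) + b ^ (1 / p))) ^ p := by
  have hroot : ∀ {c : ℝ}, 0 ≤ c → (c ^ (1 / p)) ^ p = c := fun hc => by
    rw [← Real.rpow_mul hc, one_div_mul_cancel (by positivity), Real.rpow_one]
  have hpow := Real.add_rpow_le_rpow_add (Real.rpow_nonneg ha (1 / p))
    (Real.rpow_nonneg hb (1 / p)) hp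
  rw [hroot ha, hroot hb] at hpow
  rw [Real.mul_rpow (by norm_num) (by positivity), one_div, Real.inv_rpow (by norm_num),
    ← div_eq_inv_mul]
  gcongr

namespace PreChannel

def IsChannel (W : PreChannel) : Prop :=
  (∀ x y, 0 ≤ W.W x y) ∧ ∀ x, ∑ y, W.W x y = 1

theorem IsBMS.isChannel {W : PreChannel} (h : W.IsBMS) : W.IsChannel := ⟨h.1, h.2.1⟩

variable {W : PreChannel}

theorem IsChannel.sum_half_mul_mul (h : W.IsChannel) (a b : Bool) :
    ∑ y₁, ∑ y₂, 1 / 2 * W.W a y₁ * W.W b y₂ = 1 / 2 := by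
  simp [mul_assoc, ← Finset.mul_sum, h.2]

theorem IsChannel.minus (h : W.IsChannel) : W.minus.IsChannel := by
  refine ⟨fun x p => ?_, fun x => ?_⟩
  · show 0 ≤ ∑ u : Bool, 1 / 2 * W.W (x.xor u) p.1 * W.W u p.2
    refine Finset.sum_nonneg fun u _ => ?_
    have := h.1 (x.xor u) p.1
    have := h.1 u p.2
    positivity
  · show ∑ p : W.Y × W.Y, ∑ u : Bool, 1 / 2 * W.W (x.xor u) p.1 * W.W u p.2 = 1
    rw [Finset.sum_comm, Fintype.sum_bool]
    simp only [Fintype.sum_prod_type, h.sum_half_mul_mul]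
    norm_num

theorem IsChannel.plus (h : W.IsChannel) : W.plus.IsChannel := by
  refine ⟨fun x p => ?_, fun x => ?_⟩
  · have := h.1 (p.2.2.xor x) p.1
    have := h.1 x p.2.1
    show 0 ≤ 1 / 2 * W.W (p.2.2.xor x) p.1 * W.W x p.2.1
    positivity
  · show ∑ p : W.Y × W.Y × Bool, 1 / 2 * W.W (p.2.2.xor x) p.1 * W.W x p.2.1 = 1
    simp only [Fintype.sum_prod_type, Fintype.sum_bool, Finset.sum_add_distrib,
      h.sum_half_mul_mul]
    norm_num

theorem zb_nonneg (W : PreChannel) : 0 ≤ Zb W :=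
  Finset.sum_nonneg fun _ _ => Real.sqrt_nonneg _

theorem zb_pos_iff : 0 < Zb W ↔ ∃ y, 0 < W.W false y * W.W true y := by
  simp only [Zb, Finset.sum_pos_iff_of_nonneg (fun y _ => Real.sqrt_nonneg _),
    Finset.mem_univ, true_and, Real.sqrt_pos]

theorem zb_minus_pos (hZ : 0 < Zb W) : 0 < Zb W.minus := by
  obtain ⟨y, hy⟩ := zb_pos_iff.1 hZ
  refine zb_pos_iff.2 ⟨(y, y), ?_⟩
  simp only [PreChannel.minus, Fintype.sum_bool]
  norm_num
  nlinarith [mul_pos hy hy, sq_nonneg (W.W false y - W.W true y)]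

theorem zb_plus_pos (hZ : 0 < Zb W) : 0 < Zb W.plus := by
  obtain ⟨y, hy⟩ := zb_pos_iff.1 hZ
  refine zb_pos_iff.2 ⟨(y, y, false), ?_⟩
  simp only [PreChannel.plus]
  norm_num
  nlinarith [mul_pos hy hy]

theorem IsChannel.e0_zero (h : W.IsChannel) : E0 W 0 = 0 := by
  simp [E0, ← Finset.mul_sum, Finset.sum_add_distrib, h.2]
  norm_num

theorem IsChannel.e0_le_mul_log_two (h : W.IsChannel) {ρ : ℝ} (hρ : 0 ≤ ρ) :
    E0 W ρ ≤ ρ * Real.log 2 := by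
  have hsum : 2 / 2 ^ (1 + ρ) ≤
      ∑ y, (1 / 2 * (W.W false y ^ (1 / (1 + ρ)) + W.W true y ^ (1 / (1 + ρ)))) ^ (1 + ρ) :=
    calc 2 / 2 ^ (1 + ρ) = ∑ y, (W.W false y + W.W true y) / 2 ^ (1 + ρ) := by
          rw [← Finset.sum_div, Finset.sum_add_distrib, h.2, h.2, one_add_one_eq_two]
      _ ≤ _ := Finset.sum_le_sum fun y _ =>
          add_div_two_rpow_le_rpow_mean (h.1 false y) (h.1 true y) (by linarith)
  have hlog : Real.log (2 / 2 ^ (1 + ρ)) = -(ρ * Real.log 2) := by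
    rw [Real.log_div (by norm_num) (by positivity), Real.log_rpow (by norm_num)]
    ring
  have := Real.log_le_log (by positivity) hsum
  rw [E0]
  linarith

theorem ex_le_mul_log_two {ρ : ℝ} (hρ : 0 ≤ ρ) : Ex W ρ ≤ ρ * Real.log 2 := by
  have hhalf : Real.log (1 / 2) ≤ Real.log ((1 + Zb W ^ (1 / ρ)) / 2) :=
    Real.log_le_log (by norm_num) (by linarith [Real.rpow_nonneg (zb_nonneg W) (1 / ρ)])
  rw [one_div, Real.log_inv] at hhalf
  rw [Ex]
  nlinarith

theorem ex_le_neg_log_zb_div_two (hZ : 0 < Zb W) {ρ : ℝ} (hρ : 0 < ρ) :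
    Ex W ρ ≤ -Real.log (Zb W) / 2 := by
  have hamgm := Real.geom_mean_le_arith_mean2_weighted (w₁ := 1 / 2) (w₂ := 1 / 2) (by norm_num)
    (by norm_num) zero_le_one (Real.rpow_nonneg hZ.le (1 / ρ)) (by norm_num)
  rw [Real.one_rpow, one_mul, ← Real.rpow_mul hZ.le] at hamgm
  have hlog := Real.log_le_log (by positivity)
    (hamgm.trans_eq (by ring : _ = (1 + Zb W ^ (1 / ρ)) / 2))
  rw [Real.log_rpow hZ] at hlog
  have : ρ * (1 / ρ * (1 / 2) * Real.log (Zb W)) = Real.log (Zb W) / 2 := by field_simp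
  rw [Ex]
  nlinarith

theorem IsChannel.bddAbove_image_e0 (h : W.IsChannel) : BddAbove (E0 W '' Icc 0 1) := by
  refine ⟨Real.log 2, ?_⟩
  rintro _ ⟨ρ, hρ, rfl⟩
  nlinarith [h.e0_le_mul_log_two hρ.1, hρ.2, Real.log_nonneg one_le_two]

theorem bddAbove_image_ex (hZ : 0 < Zb W) : BddAbove (Ex W '' Ici 1) :=
  ⟨_, by rintro _ ⟨ρ, hρ, rfl⟩; exact ex_le_neg_log_zb_div_two hZ (zero_lt_one.trans_le hρ)⟩

theorem er_eq_exponentSup {R : ℝ} (hR₀ : 0 < R) (hR₁ : R ≤ 1) :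
    Er W R = exponentSup (E0 W) (Icc 0 1) R := by
  rw [Er, if_neg hR₀.ne', if_neg (not_lt.2 hR₁)]
  rfl

theorem eex_eq_exponentSup (hZ : 0 < Zb W) {R : ℝ} (hR : 0 ≤ R) :
    Eex W R = exponentSup (Ex W) (Ici 1) R := by
  have hbdd := bddAbove_exponentSup_set (Ici_subset_Ici.2 zero_le_one) (bddAbove_image_ex hZ) hR
  rw [exponentSup, Monotone.map_csSup_of_continuousAt continuous_coe_real_ereal.continuousAt
    EReal.coe_strictMono.monotone (by exact ⟨_, 1, self_mem_Ici, rfl⟩) hbdd, Eex]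
  refine le_antisymm (iSup_le fun ρ => le_sSup ⟨_, ⟨ρ, ρ.2, rfl⟩, rfl⟩) (sSup_le ?_)
  rintro _ ⟨_, ⟨ρ, hρ, rfl⟩, rfl⟩
  exact le_iSup (fun ρ : {ρ : ℝ // 1 ≤ ρ} => ((Ex W ρ - ρ * R * Real.log 2 : ℝ) : EReal)) ⟨ρ, hρ⟩

theorem IsChannel.hasExponentProfile_echan (h : W.IsChannel) (hZ : 0 < Zb W) :
    HasExponentProfile (Echan W)
      (fun R => max (exponentSup (E0 W) (Icc 0 1) R) (exponentSup (Ex W) (Ici 1) R)) := by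
  have hIcc : Icc (0 : ℝ) 1 ⊆ Ici 0 := Icc_subset_Ici_self
  have hIci : Ici (1 : ℝ) ⊆ Ici 0 := Ici_subset_Ici.2 zero_le_one
  have hEr_nonneg : ∀ R, 0 ≤ R → 0 ≤ exponentSup (E0 W) (Icc 0 1) R := fun R hR => by
    simpa [h.e0_zero] using le_exponentSup hIcc h.bddAbove_image_e0 hR (left_mem_Icc.2 zero_le_one)
  have hEr_nonpos : ∀ R, 1 ≤ R → exponentSup (E0 W) (Icc 0 1) R ≤ 0 := fun R =>
    exponentSup_nonpos (nonempty_Icc.2 zero_le_one) hIcc fun ρ hρ => h.e0_le_mul_log_two hρ.1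
  have hEx_nonpos : ∀ R, 1 ≤ R → exponentSup (Ex W) (Ici 1) R ≤ 0 := fun R =>
    exponentSup_nonpos nonempty_Ici hIci fun ρ hρ => ex_le_mul_log_two (zero_le_one.trans hρ)
  have heq_zero : ∀ R, 1 ≤ R →
      max (exponentSup (E0 W) (Icc 0 1) R) (exponentSup (Ex W) (Ici 1) R) = 0 := fun R hR =>
    le_antisymm (max_le (hEr_nonpos R hR) (hEx_nonpos R hR))
      (le_max_of_le_left (hEr_nonneg R (zero_le_one.trans hR)))
  refine ⟨⟨fun R hR => le_max_of_le_left (hEr_nonneg R hR.le), heq_zero, ?_⟩, ?_, ?_⟩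
  · exact ((convexOn_exponentSup (nonempty_Icc.2 zero_le_one) hIcc h.bddAbove_image_e0).sup
      (convexOn_exponentSup nonempty_Ici hIci (bddAbove_image_ex hZ))).subset Ioi_subset_Ici_self
      (convex_Ioi 0)
  · simp [Echan, Er]
  · intro R hR
    rw [Echan]
    split_ifs with h1
    · rw [heq_zero R h1.le, EReal.coe_zero]
    · rw [er_eq_exponentSup hR (not_lt.1 h1), eex_eq_exponentSup hZ hR.le,
        EReal.coe_strictMono.monotone.map_max]

theorem IsChannel.exists_hasExponentProfile_elamInf (lam : ℕ) :
    ∀ W : PreChannel, W.IsChannel → 0 < Zb W → ∃ φ, HasExponentProfile (ElamInf W lam) φ := by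
  induction lam with
  | zero => exact fun W h hZ => ⟨_, h.hasExponentProfile_echan hZ⟩
  | succ l ih =>
    intro W h hZ
    obtain ⟨φ, hφ⟩ := ih W.minus h.minus (zb_minus_pos hZ)
    obtain ⟨ψ, hψ⟩ := ih W.plus h.plus (zb_plus_pos hZ)
    exact ⟨_, hφ.splitStep hψ⟩

end PreChannel

/-- `E_λ(W, ·)` is convex on `(0, ∞)`. -/
theorem stmt4 (W : PreChannel) (hW : W.IsBMS) (hZ : 0 < Zb W) (lam : ℕ) :
    ∀ R₁ R₂ t : ℝ, 0 < R₁ → 0 < R₂ → 0 ≤ t → t ≤ 1 →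
      ElamInf W lam (t * R₁ + (1 - t) * R₂) ≤
        (t : EReal) * ElamInf W lam R₁ + ((1 - t : ℝ) : EReal) * ElamInf W lam R₂ := by
  obtain ⟨φ, hφ⟩ := IsChannel.exists_hasExponentProfile_elamInf lam W hW.isChannel hZ
  intro R₁ R₂ t hR₁ hR₂ ht₀ ht₁
  have hR := convex_Ioi (0 : ℝ) hR₁ hR₂ ht₀ (sub_nonneg.2 ht₁) (by ring)
  have hconv := hφ.profile.convexOn.2 hR₁ hR₂ ht₀ (sub_nonneg.2 ht₁) (by ring)
  simp only [smul_eq_mul] at hR hconv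
  rw [hφ.apply_of_pos _ hR, hφ.apply_of_pos _ hR₁, hφ.apply_of_pos _ hR₂, ← EReal.coe_mul,
    ← EReal.coe_mul, ← EReal.coe_add]
  exact EReal.coe_le_coe hconv
end

section
/- Let W be a BMS channel and suppose (Alsan's polarization inequality) that 2E₀(W,ρ) ≤ E₀(W⁻,ρ) + E₀(W⁺,ρ) for all ρ ∈ [0,1]. Then for every R > 0 and every R₁ ∈ [0,2R], 2E_r(W,R) ≤ E_r(W⁻,R₁) + E_r(W⁺,2R−R₁) (as extended reals, with E_r(·,0) = +∞). -/
open scoped BigOperators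

namespace PreChannel

/-- Validity: nonnegative kernel with unit row sums. -/
def IsValid (W : PreChannel) : Prop :=
  (∀ x y, 0 ≤ W.W x y) ∧ (∀ x, ∑ y, W.W x y = 1)

lemma IsBMS.isValid {W : PreChannel} (h : W.IsBMS) : W.IsValid := ⟨h.1, h.2.1⟩

private lemma rpow_add_le_add_rpow' {a b p : ℝ} (ha : 0 ≤ a) (hb : 0 ≤ b)
    (hp : 0 ≤ p) (hp1 : p ≤ 1) : (a + b) ^ p ≤ a ^ p + b ^ p := by
  lift a to NNReal using ha
  lift b to NNReal using hb
  rw [← NNReal.coe_add, ← NNReal.coe_rpow, ← NNReal.coe_rpow, ← NNReal.coe_rpow,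
    ← NNReal.coe_add, NNReal.coe_le_coe]
  exact NNReal.rpow_add_le_add_rpow a b hp hp1

lemma isValid_minus {W : PreChannel} (h : W.IsValid) : W.minus.IsValid := by
  constructor
  · intro x p
    show (0:ℝ) ≤ ∑ u₂ : Bool, 1 / 2 * W.W (Bool.xor x u₂) p.1 * W.W u₂ p.2
    refine Finset.sum_nonneg fun u₂ _ => ?_
    have h1 := h.1 (Bool.xor x u₂) p.1
    have h2 := h.1 u₂ p.2
    positivity
  · intro x
    show ∑ p : W.Y × W.Y, ∑ u₂ : Bool, 1 / 2 * W.W (Bool.xor x u₂) p.1 * W.W u₂ p.2 = 1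
    rw [Finset.sum_comm]
    have step : ∀ u₂ : Bool,
        ∑ p : W.Y × W.Y, 1 / 2 * W.W (Bool.xor x u₂) p.1 * W.W u₂ p.2 = 1 / 2 := by
      intro u₂
      rw [Fintype.sum_prod_type]
      have inner : ∀ y₁, ∑ y₂, 1 / 2 * W.W (Bool.xor x u₂) y₁ * W.W u₂ y₂
          = 1 / 2 * W.W (Bool.xor x u₂) y₁ := by
        intro y₁; rw [← Finset.mul_sum, h.2, mul_one]
      rw [Finset.sum_congr rfl fun y₁ _ => inner y₁, ← Finset.mul_sum, h.2, mul_one]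
    rw [Finset.sum_congr rfl fun u₂ _ => step u₂]
    simp

lemma isValid_plus {W : PreChannel} (h : W.IsValid) : W.plus.IsValid := by
  constructor
  · intro x p
    have h1 := h.1 (Bool.xor p.2.2 x) p.1
    have h2 := h.1 x p.2.1
    show 0 ≤ 1 / 2 * W.W (Bool.xor p.2.2 x) p.1 * W.W x p.2.1
    positivity
  · intro x
    show ∑ p : W.Y × W.Y × Bool, 1 / 2 * W.W (Bool.xor p.2.2 x) p.1 * W.W x p.2.1 = 1
    rw [Fintype.sum_prod_type]
    have step : ∀ y₁, ∑ q : W.Y × Bool, 1 / 2 * W.W (Bool.xor q.2 x) y₁ * W.W x q.1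
        = 1 / 2 * (W.W (Bool.xor false x) y₁ + W.W (Bool.xor true x) y₁) := by
      intro y₁
      rw [Fintype.sum_prod_type]
      have inner : ∀ y₂, ∑ u₁ : Bool, 1 / 2 * W.W (Bool.xor u₁ x) y₁ * W.W x y₂
          = 1 / 2 * (W.W (Bool.xor false x) y₁ + W.W (Bool.xor true x) y₁) * W.W x y₂ := by
        intro y₂; rw [Fintype.sum_bool]; ring
      rw [Finset.sum_congr rfl fun y₂ _ => inner y₂, ← Finset.mul_sum, h.2, mul_one]
    rw [Finset.sum_congr rfl fun y₁ _ => step y₁, ← Finset.mul_sum,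
      Finset.sum_add_distrib, h.2, h.2]
    norm_num

lemma E0_zero' {U : PreChannel} (h : U.IsValid) : E0 U 0 = 0 := by
  unfold E0
  have hterm : ∀ y : U.Y,
      ((1 / 2) * (U.W false y ^ ((1:ℝ) / (1 + 0)) + U.W true y ^ ((1:ℝ) / (1 + 0)))) ^ ((1:ℝ) + 0)
        = 1 / 2 * (U.W false y + U.W true y) := by
    intro y; norm_num
  rw [Finset.sum_congr rfl fun y _ => hterm y, ← Finset.mul_sum, Finset.sum_add_distrib,
    h.2 false, h.2 true]
  norm_num

lemma E0_le' {U : PreChannel} (h : U.IsValid) {ρ : ℝ} (h0 : 0 ≤ ρ) (h1 : ρ ≤ 1) :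
    E0 U ρ ≤ ρ * Real.log 2 := by
  have hρ1 : (0:ℝ) < 1 + ρ := by linarith
  set s : ℝ := 1 / (1 + ρ) with hsdef
  have hs0 : 0 < s := by positivity
  have hs1 : s ≤ 1 := by rw [hsdef, div_le_one hρ1]; linarith
  have key : ∀ y : U.Y, (1 / 2 : ℝ) ^ (1 + ρ) * (U.W false y + U.W true y)
      ≤ ((1 / 2) * (U.W false y ^ s + U.W true y ^ s)) ^ (1 + ρ) := by
    intro y
    have ha := h.1 false y
    have hb := h.1 true y
    have hsub : (U.W false y + U.W true y) ^ s ≤ U.W false y ^ s + U.W true y ^ s :=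
      rpow_add_le_add_rpow' ha hb hs0.le hs1
    have hmono : ((1 / 2 : ℝ) * (U.W false y + U.W true y) ^ s) ^ (1 + ρ)
        ≤ ((1 / 2) * (U.W false y ^ s + U.W true y ^ s)) ^ (1 + ρ) := by
      apply Real.rpow_le_rpow
      · have := Real.rpow_nonneg (add_nonneg ha hb) s
        positivity
      · linarith
      · linarith
    refine le_trans (le_of_eq ?_) hmono
    rw [Real.mul_rpow (by norm_num) (Real.rpow_nonneg (add_nonneg ha hb) s),
      ← Real.rpow_mul (add_nonneg ha hb)]
    have hse : s * (1 + ρ) = 1 := by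
      rw [hsdef]; field_simp
    rw [hse, Real.rpow_one]
  have hpos : (0:ℝ) < (1 / 2 : ℝ) ^ (1 + ρ) * 2 := by positivity
  have hsum : (1 / 2 : ℝ) ^ (1 + ρ) * 2
      ≤ ∑ y, ((1 / 2) * (U.W false y ^ s + U.W true y ^ s)) ^ (1 + ρ) := by
    calc (1 / 2 : ℝ) ^ (1 + ρ) * 2
        = ∑ y, (1 / 2 : ℝ) ^ (1 + ρ) * (U.W false y + U.W true y) := by
          rw [← Finset.mul_sum, Finset.sum_add_distrib, h.2 false, h.2 true]; norm_num
      _ ≤ _ := Finset.sum_le_sum fun y _ => key y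
  have hlog : Real.log ((1 / 2 : ℝ) ^ (1 + ρ) * 2)
      ≤ Real.log (∑ y, ((1 / 2) * (U.W false y ^ s + U.W true y ^ s)) ^ (1 + ρ)) :=
    Real.log_le_log hpos hsum
  have hval : Real.log ((1 / 2 : ℝ) ^ (1 + ρ) * 2) = -(ρ * Real.log 2) := by
    rw [Real.log_mul (by positivity) (by norm_num), Real.log_rpow (by norm_num)]
    rw [show (1/2 : ℝ) = 2⁻¹ by norm_num, Real.log_inv]
    ring
  unfold E0
  rw [hsdef] at hlog
  linarith [hlog, hval.symm ▸ hlog]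

lemma Er_ne_bot' (U : PreChannel) (R' : ℝ) : Er U R' ≠ ⊥ := by
  unfold Er; split_ifs <;> simp

lemma er_sSup_nonneg' {U : PreChannel} (h : U.IsValid) (R' : ℝ) :
    0 ≤ sSup {x : ℝ | ∃ ρ ∈ Set.Icc (0:ℝ) 1, x = E0 U ρ - ρ * R' * Real.log 2} := by
  refine Real.sSup_nonneg' ⟨0, ⟨0, ⟨le_refl _, zero_le_one⟩, ?_⟩, le_refl 0⟩
  simp [E0_zero' h]

lemma Er_nonneg' {U : PreChannel} (h : U.IsValid) (R' : ℝ) : 0 ≤ Er U R' := by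
  unfold Er
  split_ifs
  · exact le_top
  · exact le_refl _
  · exact_mod_cast er_sSup_nonneg' h R'

lemma er_elem_le_sSup' {U : PreChannel} (h : U.IsValid) {R' : ℝ} (hR' : 0 ≤ R')
    {ρ : ℝ} (hρ : ρ ∈ Set.Icc (0:ℝ) 1) :
    E0 U ρ - ρ * R' * Real.log 2
      ≤ sSup {x : ℝ | ∃ ρ ∈ Set.Icc (0:ℝ) 1, x = E0 U ρ - ρ * R' * Real.log 2} := by
  apply le_csSup
  · refine ⟨Real.log 2, ?_⟩
    rintro x ⟨σ, hσ, rfl⟩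
    have hE := E0_le' h hσ.1 hσ.2
    have hlog : 0 ≤ Real.log 2 := Real.log_nonneg one_le_two
    have hnn : 0 ≤ σ * R' * Real.log 2 := mul_nonneg (mul_nonneg hσ.1 hR') hlog
    nlinarith [hσ.1, hσ.2]
  · exact ⟨ρ, hρ, rfl⟩

end PreChannel

open PreChannel

/-- Alsan's inequality implies
`2 E_r(W,R) ≤ E_r(W⁻,R₁) + E_r(W⁺,2R−R₁)`. -/
theorem stmt7 (W : PreChannel) (hW : W.IsBMS)
    (hAlsan : ∀ ρ ∈ Set.Icc (0 : ℝ) 1, 2 * E0 W ρ ≤ E0 W.minus ρ + E0 W.plus ρ)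
    (R R₁ : ℝ) (hR : 0 < R) (hR₁ : R₁ ∈ Set.Icc 0 (2 * R)) :
    (2 : EReal) * Er W R ≤ Er W.minus R₁ + Er W.plus (2 * R - R₁) := by
  have hV : W.IsValid := hW.isValid
  have hVm : W.minus.IsValid := isValid_minus hV
  have hVp : W.plus.IsValid := isValid_plus hV
  obtain ⟨hR₁0, hR₁2⟩ := hR₁
  by_cases h1 : R₁ = 0
  · rw [show Er W.minus R₁ = ⊤ by simp [Er, h1],
      EReal.top_add_of_ne_bot (Er_ne_bot' _ _)]
    exact le_top
  by_cases h2 : 2 * R - R₁ = 0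
  · rw [show Er W.plus (2 * R - R₁) = ⊤ by simp [Er, h2],
      EReal.add_top_of_ne_bot (Er_ne_bot' _ _)]
    exact le_top
  by_cases hRtop : 1 < R
  · rw [show Er W R = 0 by simp [Er, hR.ne', hRtop], mul_zero]
    calc (0 : EReal) = 0 + 0 := by simp
      _ ≤ _ := add_le_add (Er_nonneg' hVm _) (Er_nonneg' hVp _)
  push_neg at hRtop
  have hR₁pos : 0 < R₁ := lt_of_le_of_ne hR₁0 (Ne.symm h1)
  have hR₂pos : 0 < 2 * R - R₁ := lt_of_le_of_ne (by linarith) (Ne.symm h2)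
  have hlog : 0 ≤ Real.log 2 := Real.log_nonneg one_le_two
  set a := sSup {x : ℝ | ∃ ρ ∈ Set.Icc (0:ℝ) 1, x = E0 W ρ - ρ * R * Real.log 2} with ha
  set b := sSup {x : ℝ | ∃ ρ ∈ Set.Icc (0:ℝ) 1, x = E0 W.minus ρ - ρ * R₁ * Real.log 2} with hb
  set c := sSup {x : ℝ | ∃ ρ ∈ Set.Icc (0:ℝ) 1,
    x = E0 W.plus ρ - ρ * (2 * R - R₁) * Real.log 2} with hc
  have hbnn : 0 ≤ b := er_sSup_nonneg' hVm _
  have hcnn : 0 ≤ c := er_sSup_nonneg' hVp _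
  have hEW : Er W R = ((a : ℝ) : EReal) := by
    rw [Er, if_neg hR.ne', if_neg (not_lt.2 hRtop), ha]
  rw [hEW]
  by_cases hm : 1 < R₁
  · have hp1 : 2 * R - R₁ ≤ 1 := by linarith
    have hEm : Er W.minus R₁ = 0 := by rw [Er, if_neg h1, if_pos hm]
    have hEp : Er W.plus (2 * R - R₁) = ((c : ℝ) : EReal) := by
      rw [Er, if_neg h2, if_neg (not_lt.2 hp1), hc]
    rw [hEm, hEp, zero_add]
    have key : 2 * a ≤ c := by
      have hstep : ∀ x ∈ {x : ℝ | ∃ ρ ∈ Set.Icc (0:ℝ) 1, x = E0 W ρ - ρ * R * Real.log 2},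
          x ≤ c / 2 := by
        rintro x ⟨ρ, hρ, rfl⟩
        have hAl := hAlsan ρ hρ
        have hEmle := E0_le' hVm hρ.1 hρ.2
        have hEple := er_elem_le_sSup' hVp hR₂pos.le hρ
        rw [← hc] at hEple
        have hident : ρ * (2 * R - R₁) * Real.log 2 + ρ * R₁ * Real.log 2
            = 2 * (ρ * R * Real.log 2) := by ring
        have hP : ρ * Real.log 2 ≤ ρ * R₁ * Real.log 2 := by
          linarith [mul_nonneg (mul_nonneg hρ.1 hlog) (by linarith : (0:ℝ) ≤ R₁ - 1)]
        linarith
      have := Real.sSup_le hstep (by linarith)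
      rw [← ha] at this
      linarith
    calc (2:EReal) * (a:EReal) = ((2*a : ℝ) : EReal) := by norm_cast
      _ ≤ ((c:ℝ):EReal) := EReal.coe_le_coe_iff.2 key
  push_neg at hm
  by_cases hp : 1 < 2 * R - R₁
  · have hEp : Er W.plus (2 * R - R₁) = 0 := by rw [Er, if_neg h2, if_pos hp]
    have hEm : Er W.minus R₁ = ((b : ℝ) : EReal) := by
      rw [Er, if_neg h1, if_neg (not_lt.2 hm), hb]
    rw [hEm, hEp, add_zero]
    have key : 2 * a ≤ b := by
      have hstep : ∀ x ∈ {x : ℝ | ∃ ρ ∈ Set.Icc (0:ℝ) 1, x = E0 W ρ - ρ * R * Real.log 2},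
          x ≤ b / 2 := by
        rintro x ⟨ρ, hρ, rfl⟩
        have hAl := hAlsan ρ hρ
        have hEple := E0_le' hVp hρ.1 hρ.2
        have hEmle := er_elem_le_sSup' hVm hR₁pos.le hρ
        rw [← hb] at hEmle
        have hident : ρ * (2 * R - R₁) * Real.log 2 + ρ * R₁ * Real.log 2
            = 2 * (ρ * R * Real.log 2) := by ring
        have hP : ρ * Real.log 2 ≤ ρ * (2 * R - R₁) * Real.log 2 := by
          linarith [mul_nonneg (mul_nonneg hρ.1 hlog) (by linarith : (0:ℝ) ≤ 2 * R - R₁ - 1)]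
        linarith
      have := Real.sSup_le hstep (by linarith)
      rw [← ha] at this
      linarith
    calc (2:EReal) * (a:EReal) = ((2*a : ℝ) : EReal) := by norm_cast
      _ ≤ ((b:ℝ):EReal) := EReal.coe_le_coe_iff.2 key
  push_neg at hp
  have hEm : Er W.minus R₁ = ((b : ℝ) : EReal) := by
    rw [Er, if_neg h1, if_neg (not_lt.2 hm), hb]
  have hEp : Er W.plus (2 * R - R₁) = ((c : ℝ) : EReal) := by
    rw [Er, if_neg h2, if_neg (not_lt.2 hp), hc]
  rw [hEm, hEp]
  have key : 2 * a ≤ b + c := by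
    have hstep : ∀ x ∈ {x : ℝ | ∃ ρ ∈ Set.Icc (0:ℝ) 1, x = E0 W ρ - ρ * R * Real.log 2},
        x ≤ (b + c) / 2 := by
      rintro x ⟨ρ, hρ, rfl⟩
      have hAl := hAlsan ρ hρ
      have hEmle := er_elem_le_sSup' hVm hR₁pos.le hρ
      have hEple := er_elem_le_sSup' hVp hR₂pos.le hρ
      rw [← hb] at hEmle
      rw [← hc] at hEple
      have hident : ρ * (2 * R - R₁) * Real.log 2 + ρ * R₁ * Real.log 2
          = 2 * (ρ * R * Real.log 2) := by ring
      linarith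
    have := Real.sSup_le hstep (by linarith)
    rw [← ha] at this
    linarith
  calc (2:EReal) * (a:EReal) = ((2*a : ℝ) : EReal) := by norm_cast
    _ ≤ (((b+c):ℝ):EReal) := EReal.coe_le_coe_iff.2 key
    _ = _ := by norm_cast
end

section
/- Let W be a BMS channel with Z(W) > 0, let R ∈ (0,1], and let B = [max(0,2R−1), min(1,2R)]. Assume (i) 2E₀(W,ρ) ≤ E₀(W⁻,ρ) + E₀(W⁺,ρ) for all ρ ∈ [0,1], and (ii) E₀(W⁻,1) ≥ E_r(W⁺,2R) and E_r(W⁻,2R) ≤ E₀(W⁺,1), where by convention E_r(V,r) = 0 for r > 1. Then sup_{R₁∈B} min[E_r(W⁻,R₁), E_r(W⁺,2R−R₁)] ≥ E_r(W,R); equivalently, the random-coding exponent E_{r,1}(W,R) = (1/2)·sup_{R₁∈B} min[E_r(W⁻,R₁), E_r(W⁺,2R−R₁)] of the one-step polarized scheme is at least the naive exponent E_r(W,R)/2. -/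
open scoped BigOperators

open PreChannel


/-! ### Auxiliary lemmas for `stmt8` -/

def Good (V : PreChannel) : Prop := (∀ x y, 0 ≤ V.W x y) ∧ ∀ x, ∑ y, V.W x y = 1

lemma sum_prod_mul {α β : Type} [Fintype α] [Fintype β] (f : α → ℝ) (g : β → ℝ) (c : ℝ) :
    ∑ p : α × β, c * f p.1 * g p.2 = c * (∑ a, f a) * (∑ b, g b) := by
  rw [Fintype.sum_prod_type]
  rw [mul_assoc, Finset.sum_mul_sum, Finset.mul_sum]
  refine Finset.sum_congr rfl fun a _ => ?_
  rw [Finset.mul_sum]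
  exact Finset.sum_congr rfl fun b _ => by ring

lemma good_minus {W : PreChannel} (h : Good W) : Good W.minus := by
  constructor
  · intro x p
    show 0 ≤ ∑ u₂ : Bool, (1/2) * W.W (Bool.xor x u₂) p.1 * W.W u₂ p.2
    refine Finset.sum_nonneg fun u _ => ?_
    have ha := h.1 (Bool.xor x u) p.1
    have hb := h.1 u p.2
    have : (0:ℝ) ≤ (1/2 : ℝ) := by norm_num
    exact mul_nonneg (mul_nonneg this ha) hb
  · intro x
    show ∑ p : W.Y × W.Y, ∑ u₂ : Bool, (1/2) * W.W (Bool.xor x u₂) p.1 * W.W u₂ p.2 = 1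
    rw [Finset.sum_comm]
    have key : ∀ u₂ : Bool, ∑ p : W.Y × W.Y, (1/2) * W.W (Bool.xor x u₂) p.1 * W.W u₂ p.2
        = 1/2 := by
      intro u₂
      rw [sum_prod_mul (W.W (Bool.xor x u₂)) (W.W u₂) (1/2), h.2, h.2]
      ring
    rw [Finset.sum_congr rfl fun u _ => key u]
    simp

lemma good_plus {W : PreChannel} (h : Good W) : Good W.plus := by
  constructor
  · intro x p
    have ha := h.1 (Bool.xor p.2.2 x) p.1
    have hb := h.1 x p.2.1
    have : (0:ℝ) ≤ (1/2 : ℝ) := by norm_num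
    exact mul_nonneg (mul_nonneg this ha) hb
  · intro x
    show ∑ p : W.Y × W.Y × Bool, (1/2) * W.W (Bool.xor p.2.2 x) p.1 * W.W x p.2.1 = 1
    rw [Fintype.sum_prod_type]
    have key : ∀ y₁, ∑ q : W.Y × Bool, (1/2) * W.W (Bool.xor q.2 x) y₁ * W.W x q.1
        = ∑ u₁ : Bool, (1/2) * W.W (Bool.xor u₁ x) y₁ := by
      intro y₁
      rw [Fintype.sum_prod_type, Finset.sum_comm]
      refine Finset.sum_congr rfl fun u₁ _ => ?_
      show ∑ y₂ : W.Y, (1/2) * W.W (Bool.xor u₁ x) y₁ * W.W x y₂ = _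
      rw [← Finset.mul_sum, h.2, mul_one]
    rw [Finset.sum_congr rfl fun y₁ _ => key y₁, Finset.sum_comm]
    have key2 : ∀ u₁ : Bool, ∑ y₁, (1/2) * W.W (Bool.xor u₁ x) y₁ = 1/2 := by
      intro u₁
      rw [← Finset.mul_sum, h.2, mul_one]
    rw [Finset.sum_congr rfl fun u _ => key2 u]
    simp

lemma E0_zero {V : PreChannel} (h : Good V) : E0 V 0 = 0 := by
  unfold E0
  have key : (∑ y, ((1/2) * (V.W false y ^ ((1:ℝ) / (1 + 0)) + V.W true y ^ ((1:ℝ) / (1 + 0)))) ^ ((1:ℝ) + 0))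
      = 1 := by
    have h1 : ∀ y, ((1/2) * (V.W false y ^ ((1:ℝ) / (1 + 0)) + V.W true y ^ ((1:ℝ) / (1 + 0)))) ^ ((1:ℝ) + 0)
        = (1/2) * (V.W false y + V.W true y) := by
      intro y; norm_num
    rw [Finset.sum_congr rfl fun y _ => h1 y, ← Finset.mul_sum, Finset.sum_add_distrib, h.2, h.2]
    norm_num
  rw [key, Real.log_one, neg_zero]

lemma add_rpow_le {a b p : ℝ} (ha : 0 ≤ a) (hb : 0 ≤ b) (hp : 0 ≤ p) (hp1 : p ≤ 1) :
    (a + b) ^ p ≤ a ^ p + b ^ p := by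
  have h := NNReal.rpow_add_le_add_rpow a.toNNReal b.toNNReal hp hp1
  have h2 := NNReal.coe_le_coe.2 h
  push_cast at h2
  rwa [Real.coe_toNNReal _ ha, Real.coe_toNNReal _ hb] at h2

lemma E0_le {V : PreChannel} (h : Good V) {ρ : ℝ} (hρ : ρ ∈ Set.Icc (0:ℝ) 1) :
    E0 V ρ ≤ ρ * Real.log 2 := by
  obtain ⟨hρ0, hρ1⟩ := hρ
  have h1ρ : (0:ℝ) < 1 + ρ := by linarith
  set s : ℝ := 1 / (1 + ρ) with hs
  have hs0 : 0 < s := by positivity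
  have hs1 : s ≤ 1 := by
    rw [hs, div_le_one h1ρ]; linarith
  have hpt : ∀ y, ((2:ℝ) ^ (-(1+ρ))) * (V.W false y + V.W true y)
      ≤ ((1/2) * (V.W false y ^ s + V.W true y ^ s)) ^ (1 + ρ) := by
    intro y
    have ha := h.1 false y
    have hb := h.1 true y
    have hsub : (V.W false y + V.W true y) ^ s ≤ V.W false y ^ s + V.W true y ^ s :=
      add_rpow_le ha hb hs0.le hs1
    have step1 : ((1/2) * ((V.W false y + V.W true y) ^ s)) ^ (1 + ρ)
        ≤ ((1/2) * (V.W false y ^ s + V.W true y ^ s)) ^ (1 + ρ) := by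
      apply Real.rpow_le_rpow
      · positivity
      · nlinarith
      · linarith
    refine le_trans (le_of_eq ?_) step1
    rw [Real.mul_rpow (by norm_num) (Real.rpow_nonneg (by linarith) s),
      ← Real.rpow_mul (by linarith : (0:ℝ) ≤ V.W false y + V.W true y)]
    have hs2 : s * (1 + ρ) = 1 := by
      rw [hs]; field_simp
    rw [hs2, Real.rpow_one]
    have h12 : ((1:ℝ)/2) ^ (1+ρ) = (2:ℝ) ^ (-(1+ρ)) := by
      rw [Real.rpow_neg (by norm_num : (0:ℝ) ≤ 2)]
      rw [one_div, Real.inv_rpow (by norm_num : (0:ℝ) ≤ 2)]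
    rw [h12]
  have hsum : (2:ℝ) ^ (-ρ) ≤ ∑ y, ((1/2) * (V.W false y ^ s + V.W true y ^ s)) ^ (1 + ρ) := by
    calc (2:ℝ) ^ (-ρ) = ((2:ℝ) ^ (-(1+ρ))) * 2 := by
          rw [← Real.rpow_add_one (by norm_num : (2:ℝ) ≠ 0)]
          norm_num
      _ = ∑ y, ((2:ℝ) ^ (-(1+ρ))) * (V.W false y + V.W true y) := by
          rw [← Finset.mul_sum, Finset.sum_add_distrib, h.2, h.2]; norm_num
      _ ≤ _ := Finset.sum_le_sum fun y _ => hpt y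
  have hpos : (0:ℝ) < (2:ℝ) ^ (-ρ) := Real.rpow_pos_of_pos (by norm_num) _
  unfold E0
  have hlog := Real.log_le_log hpos hsum
  rw [Real.log_rpow (by norm_num : (0:ℝ) < 2)] at hlog
  linarith

lemma bddAboveEr {V : PreChannel} (h : Good V) {R' : ℝ} (hR' : 0 ≤ R') :
    BddAbove {x : ℝ | ∃ ρ ∈ Set.Icc (0:ℝ) 1, x = E0 V ρ - ρ * R' * Real.log 2} := by
  refine ⟨Real.log 2, fun x hx => ?_⟩
  obtain ⟨ρ, hρ, rfl⟩ := hx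
  have h1 := E0_le h hρ
  have h2 : 0 ≤ ρ * R' * Real.log 2 := by
    have hl := Real.log_nonneg (by norm_num : (1:ℝ) ≤ 2)
    have h0 := hρ.1
    positivity
  have h3 : ρ * Real.log 2 ≤ Real.log 2 := by
    have := Real.log_nonneg (by norm_num : (1:ℝ) ≤ 2)
    nlinarith [hρ.2]
  linarith

lemma Er_of_zero (V : PreChannel) {r : ℝ} (h : r = 0) : Er V r = ⊤ := by
  simp only [Er, if_pos h]

lemma le_Er_aux {V : PreChannel} (h : Good V) {R' ρ' c : ℝ} (hR' : R' ∈ Set.Icc (0:ℝ) 1)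
    (hρ' : ρ' ∈ Set.Icc (0:ℝ) 1) (hc : c ≤ E0 V ρ' - ρ' * R' * Real.log 2) :
    (c : EReal) ≤ Er V R' := by
  rcases eq_or_lt_of_le hR'.1 with h0 | h0
  · rw [Er_of_zero V h0.symm]; exact le_top
  · simp only [Er, if_neg h0.ne', if_neg (not_lt.2 hR'.2)]
    have hmem : E0 V ρ' - ρ' * R' * Real.log 2 ∈
        {x : ℝ | ∃ ρ ∈ Set.Icc (0:ℝ) 1, x = E0 V ρ - ρ * R' * Real.log 2} := ⟨ρ', hρ', rfl⟩
    have := le_csSup (bddAboveEr h hR'.1) hmem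
    exact_mod_cast hc.trans this

/-- the one-step polarized random-coding exponent is at least the
naive exponent. -/
theorem stmt8 (W : PreChannel) (hW : W.IsBMS) (hZ : 0 < Zb W)
    (R : ℝ) (hR : R ∈ Set.Ioc (0 : ℝ) 1)
    (hAlsan : ∀ ρ ∈ Set.Icc (0 : ℝ) 1, 2 * E0 W ρ ≤ E0 W.minus ρ + E0 W.plus ρ)
    (hcond1 : Er W.plus (2 * R) ≤ ((E0 W.minus 1 : ℝ) : EReal))
    (hcond2 : Er W.minus (2 * R) ≤ ((E0 W.plus 1 : ℝ) : EReal)) :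
    Er W R ≤
      sSup {v : EReal | ∃ R₁ ∈ Set.Icc (max 0 (2 * R - 1)) (min 1 (2 * R)),
        v = min (Er W.minus R₁) (Er W.plus (2 * R - R₁))} := by
  obtain ⟨hRpos, hRle⟩ := hR
  have hgood : Good W := ⟨hW.1, hW.2.1⟩
  have hgm : Good W.minus := good_minus hgood
  have hgp : Good W.plus := good_plus hgood
  have hlog2 : (0:ℝ) < Real.log 2 := Real.log_pos (by norm_num)
  set T := sSup {v : EReal | ∃ R₁ ∈ Set.Icc (max 0 (2 * R - 1)) (min 1 (2 * R)),
      v = min (Er W.minus R₁) (Er W.plus (2 * R - R₁))} with hT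
  have fin : ∀ R₁ : ℝ, R₁ ∈ Set.Icc (max 0 (2*R-1)) (min 1 (2*R)) →
      ∀ c : ℝ, (c:EReal) ≤ Er W.minus R₁ → (c:EReal) ≤ Er W.plus (2*R-R₁) → (c:EReal) ≤ T := by
    intro R₁ hmem c h1 h2
    exact le_trans (le_min h1 h2) (le_sSup ⟨R₁, hmem, rfl⟩)
  have key : ∀ ρ ∈ Set.Icc (0:ℝ) 1, ((E0 W ρ - ρ * R * Real.log 2 : ℝ) : EReal) ≤ T := by
    intro ρ hρ
    set c := E0 W ρ - ρ * R * Real.log 2 with hc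
    set d := ρ * Real.log 2 with hd
    rcases le_or_gt c 0 with hcle | hcpos
    · refine fin R ⟨max_le hRpos.le (by linarith), le_min hRle (by linarith)⟩ c ?_ ?_
      · refine le_Er_aux hgm ⟨hRpos.le, hRle⟩ ⟨le_refl (0:ℝ), zero_le_one⟩ ?_
        rw [E0_zero hgm]
        simpa using hcle
      · refine le_Er_aux hgp ⟨by linarith, by linarith⟩ ⟨le_refl (0:ℝ), zero_le_one⟩ ?_
        rw [E0_zero hgp]
        simpa using hcle
    · have hρpos : 0 < ρ := by
        rcases lt_or_eq_of_le hρ.1 with hp | hp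
        · exact hp
        · exfalso
          rw [← hp] at hc
          rw [E0_zero hgood] at hc
          norm_num at hc
          linarith
      have hdpos : 0 < d := by rw [hd]; positivity
      have hA := hAlsan ρ hρ
      set A := E0 W.minus ρ with hAdef
      set Bp := E0 W.plus ρ with hBdef
      have hAle : A ≤ d := E0_le hgm hρ
      have hBle : Bp ≤ d := E0_le hgp hρ
      have hsum : 2*c + 2*(R*d) ≤ A + Bp := by
        have h1 : ρ * R * Real.log 2 = R * d := by rw [hd]; ring
        rw [hc]
        linarith
      rcases lt_or_ge Bp c with hBc | hcB
      · -- Bp < c : take R₁ = 2R, requires 2R ≤ 1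
        have h2R : 2*R ≤ 1 := by
          by_contra hcon
          push_neg at hcon
          nlinarith
        refine fin (2*R) ⟨max_le (by linarith) (by linarith), le_min h2R le_rfl⟩ c ?_ ?_
        · refine le_Er_aux hgm ⟨by linarith, h2R⟩ hρ ?_
          have h1 : ρ * (2*R) * Real.log 2 = 2*(R*d) := by rw [hd]; ring
          rw [← hAdef]
          linarith
        · rw [Er_of_zero W.plus (by ring : 2*R - 2*R = 0)]
          exact le_top
      rcases lt_or_ge A c with hAc | hcA
      · -- A < c : take R₁ = 0, requires 2R ≤ 1
        have h2R : 2*R ≤ 1 := by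
          by_contra hcon
          push_neg at hcon
          nlinarith
        refine fin 0 ⟨max_le le_rfl (by linarith), le_min zero_le_one (by linarith)⟩ c ?_ ?_
        · rw [Er_of_zero W.minus rfl]
          exact le_top
        · refine le_Er_aux hgp ⟨by linarith, by linarith⟩ hρ ?_
          have h1 : ρ * (2*R - 0) * Real.log 2 = 2*(R*d) := by rw [hd]; ring
          rw [← hBdef]
          linarith
      · -- c ≤ A and c ≤ Bp
        set e := (Bp - c)/d with he
        have hed : e * d = Bp - c := div_mul_cancel₀ _ hdpos.ne'
        have he0 : 0 ≤ e := by
          apply div_nonneg (by linarith) hdpos.le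
        have he1 : e < 1 := by
          rw [he, div_lt_one hdpos]
          linarith
        have h2Re : 2*R - e ≤ 1 := by
          nlinarith
        have hR₁1 : max 0 (2*R - e) ≤ 1 := max_le zero_le_one h2Re
        have hR₁2R : max 0 (2*R - e) ≤ 2*R := max_le (by linarith) (by linarith)
        refine fin (max 0 (2*R - e))
          ⟨max_le (le_max_left _ _) (le_trans (by linarith) (le_max_right 0 (2*R - e))),
           le_min hR₁1 hR₁2R⟩ c ?_ ?_
        · refine le_Er_aux hgm ⟨le_max_left _ _, hR₁1⟩ hρ ?_
          rw [← hAdef]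
          rcases le_total (2*R - e) 0 with hle | hle
          · rw [max_eq_left hle]
            have h1 : ρ * (0:ℝ) * Real.log 2 = 0 := by ring
            linarith
          · rw [max_eq_right hle]
            have h1 : ρ * (2*R - e) * Real.log 2 = 2*(R*d) - e*d := by rw [hd]; ring
            linarith
        · refine le_Er_aux hgp ⟨by linarith, ?_⟩ hρ ?_
          · have : 2*R - e ≤ max 0 (2*R - e) := le_max_right _ _
            linarith
          · rw [← hBdef]
            have hge : 2*R - e ≤ max 0 (2*R - e) := le_max_right _ _
            have h1 : ρ * (2*R - max 0 (2*R - e)) * Real.log 2 = (2*R - max 0 (2*R - e))*d := by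
              rw [hd]; ring
            have h2 : (2*R - max 0 (2*R - e))*d ≤ e*d :=
              mul_le_mul_of_nonneg_right (by linarith) hdpos.le
            linarith
  simp only [Er, if_neg hRpos.ne', if_neg (not_lt.2 hRle)]
  by_cases hTtop : T = ⊤
  · rw [hTtop]; exact le_top
  · have h0T : (0:EReal) ≤ T := by
      have := key 0 ⟨le_rfl, zero_le_one⟩
      simpa [E0_zero hgood] using this
    have hTbot : T ≠ ⊥ := by
      intro hb
      rw [hb] at h0T
      exact absurd h0T (by simp)
    have hTt : T = ((T.toReal : ℝ) : EReal) := (EReal.coe_toReal hTtop hTbot).symm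
    rw [hTt]
    have hne : {x : ℝ | ∃ ρ ∈ Set.Icc (0:ℝ) 1, x = E0 W ρ - ρ * R * Real.log 2}.Nonempty :=
      ⟨E0 W 0 - 0 * R * Real.log 2, ⟨0, ⟨le_rfl, zero_le_one⟩, rfl⟩⟩
    have hub : ∀ x ∈ {x : ℝ | ∃ ρ ∈ Set.Icc (0:ℝ) 1, x = E0 W ρ - ρ * R * Real.log 2},
        x ≤ T.toReal := by
      intro x hx
      obtain ⟨ρ, hρ, rfl⟩ := hx
      have h1 := key ρ hρ
      rw [hTt] at h1
      exact_mod_cast h1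
    exact_mod_cast csSup_le hne hub
end

section
/- Let M ≥ 1 be an integer, let I₀,…,I_{M−1} be real numbers, let V₀,…,V_{M−1} > 0, let R ∈ ℝ, and set Ī = (1/M)Σ_{i} I_i. Then the supremum, over all tuples (R₀,…,R_{M−1}) ∈ ℝ^M with Σ_i R_i = M·R, of min_{0≤i<M} (I_i − R_i)/√(V_i) equals M(Ī − R)/Σ_j √(V_j), and it is attained at R_i = I_i − M(Ī−R)√(V_i)/Σ_j √(V_j). Consequently, for any N₁ > 0, the minimum over such tuples of max_i Q( (I_i − R_i)·√(N₁/V_i) ) equals Q( (Ī − R)·√(N/Ṽ) ), where N = M·N₁ and Ṽ = (Σ_j √(V_j))²/M. -/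
open scoped BigOperators

open PreChannel

lemma gaussQ_anti : Antitone gaussQ := by
  have hint : MeasureTheory.Integrable
      (fun t : ℝ => (Real.sqrt (2 * Real.pi))⁻¹ * Real.exp (-t ^ 2 / 2)) := by
    have h := (integrable_exp_neg_mul_sq (by norm_num : (0:ℝ) < 1/2)).const_mul
      (Real.sqrt (2 * Real.pi))⁻¹
    convert h using 3 with t
    ring_nf
  intro u v huv
  apply MeasureTheory.setIntegral_mono_set hint.integrableOn
  · exact Filter.Eventually.of_forall fun t =>
      mul_nonneg (inv_nonneg.2 (Real.sqrt_nonneg _)) (Real.exp_pos _).le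
  · exact (Set.Ioi_subset_Ioi huv).eventuallyLE

/-- optimal rate split for the min-max (normal approximation) problem. -/
theorem stmt10 (M : ℕ) (hM : 1 ≤ M) (I V : Fin M → ℝ) (hV : ∀ i, 0 < V i)
    (R Ibar : ℝ) (hIbar : Ibar = (∑ i, I i) / M)
    (Rstar : Fin M → ℝ)
    (hRstar : ∀ i, Rstar i =
      I i - (M : ℝ) * (Ibar - R) * Real.sqrt (V i) / (∑ j, Real.sqrt (V j))) :
    (IsGreatest {m : ℝ | ∃ Rv : Fin M → ℝ, (∑ i, Rv i) = (M : ℝ) * R ∧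
        m = ⨅ i, (I i - Rv i) / Real.sqrt (V i)}
      ((M : ℝ) * (Ibar - R) / (∑ j, Real.sqrt (V j)))) ∧
    ((∑ i, Rstar i) = (M : ℝ) * R ∧
      (⨅ i, (I i - Rstar i) / Real.sqrt (V i)) =
        (M : ℝ) * (Ibar - R) / (∑ j, Real.sqrt (V j))) ∧
    (∀ N₁ : ℝ, 0 < N₁ →
      IsLeast {m : ℝ | ∃ Rv : Fin M → ℝ, (∑ i, Rv i) = (M : ℝ) * R ∧
          m = ⨆ i, gaussQ ((I i - Rv i) * Real.sqrt (N₁ / V i))}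
        (gaussQ ((Ibar - R) *
          Real.sqrt (((M : ℝ) * N₁) / ((∑ j, Real.sqrt (V j)) ^ 2 / (M : ℝ)))))) := by
  have hne : Nonempty (Fin M) := Fin.pos_iff_nonempty.1 hM
  have hMpos : (0:ℝ) < M := by exact_mod_cast hM
  set S : ℝ := ∑ j, Real.sqrt (V j) with hSdef
  have hSpos : 0 < S :=
    Finset.sum_pos (fun j _ => Real.sqrt_pos.2 (hV j)) Finset.univ_nonempty
  set c : ℝ := (M : ℝ) * (Ibar - R) / S with hcdef
  have hRstar' : ∀ i, Rstar i = I i - c * Real.sqrt (V i) := by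
    intro i; rw [hRstar i, hcdef]; ring
  have hsumI : ∑ i, I i = (M : ℝ) * Ibar := by
    rw [hIbar]; field_simp
  have hcS : c * S = (M : ℝ) * (Ibar - R) := by
    rw [hcdef, div_mul_cancel₀ _ hSpos.ne']
  have hsumRstar : (∑ i, Rstar i) = (M : ℝ) * R := by
    simp only [hRstar']
    rw [Finset.sum_sub_distrib, hsumI, ← Finset.mul_sum, ← hSdef]
    have : c * S = (M : ℝ) * (Ibar - R) := hcS
    nlinarith [this]
  have hratio : ∀ i, (I i - Rstar i) / Real.sqrt (V i) = c := by
    intro i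
    have hs : Real.sqrt (V i) ≠ 0 := (Real.sqrt_pos.2 (hV i)).ne'
    rw [hRstar' i, sub_sub_cancel, mul_div_assoc, div_self hs, mul_one]
  have key : ∀ Rv : Fin M → ℝ, (∑ i, Rv i) = (M : ℝ) * R →
      ∃ i, (I i - Rv i) / Real.sqrt (V i) ≤ c := by
    intro Rv hsum
    have h1 : ∑ i, (I i - Rv i) ≤ ∑ i, c * Real.sqrt (V i) := by
      rw [Finset.sum_sub_distrib, hsumI, hsum, ← Finset.mul_sum, ← hSdef, hcS]
      ring_nf
      exact le_refl _
    obtain ⟨i, _, hi⟩ := Finset.exists_le_of_sum_le Finset.univ_nonempty h1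
    exact ⟨i, (div_le_iff₀ (Real.sqrt_pos.2 (hV i))).2 hi⟩
  have hinf_const : (⨅ i, (I i - Rstar i) / Real.sqrt (V i)) = c := by
    simp only [hratio]; exact ciInf_const
  refine ⟨⟨⟨Rstar, hsumRstar, hinf_const.symm⟩, ?_⟩, ⟨hsumRstar, hinf_const⟩, ?_⟩
  · rintro m ⟨Rv, hsum, rfl⟩
    obtain ⟨i, hi⟩ := key Rv hsum
    exact le_trans (ciInf_le (Set.Finite.bddBelow (Set.finite_range _)) i) hi
  · intro N₁ hN₁
    have harg : (Ibar - R) * Real.sqrt (((M : ℝ) * N₁) / (S ^ 2 / (M : ℝ)))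
        = c * Real.sqrt N₁ := by
      have h1 : ((M : ℝ) * N₁) / (S ^ 2 / (M : ℝ))
          = ((M : ℝ) * Real.sqrt N₁ / S) ^ 2 := by
        rw [div_pow, mul_pow, Real.sq_sqrt hN₁.le]
        field_simp
      rw [h1, Real.sqrt_sq (by positivity), hcdef]
      ring
    have hargi : ∀ (Rv : Fin M → ℝ) (i : Fin M),
        (I i - Rv i) * Real.sqrt (N₁ / V i)
          = ((I i - Rv i) / Real.sqrt (V i)) * Real.sqrt N₁ := by
      intro Rv i
      rw [Real.sqrt_div hN₁.le]
      ring
    constructor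
    · refine ⟨Rstar, hsumRstar, ?_⟩
      rw [harg]
      simp only [hargi Rstar, hratio]
      exact (ciSup_const).symm
    · rintro m ⟨Rv, hsum, rfl⟩
      obtain ⟨i, hi⟩ := key Rv hsum
      rw [harg]
      have h2 : gaussQ (c * Real.sqrt N₁)
          ≤ gaussQ ((I i - Rv i) * Real.sqrt (N₁ / V i)) := by
        rw [hargi Rv i]
        exact gaussQ_anti (mul_le_mul_of_nonneg_right hi (Real.sqrt_nonneg _))
      exact le_trans h2 (le_ciSup (f := fun j => gaussQ ((I j - Rv j) * Real.sqrt (N₁ / V j))) (Set.Finite.bddAbove (Set.finite_range _)) i)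
end

section
/- Let λ ≥ 1 be an integer and let (W_n) be a sequence of BMS channels with δ_n := 1 − I(W_n) > 0 for all n and δ_n → 0 as n → ∞. Then: (i) for the all-minus sign sequence of length λ, (1 − I(W_n^{−⋯−}))/δ_n → 2^λ as n → ∞; and (ii) for every sign sequence s ∈ {+,−}^λ containing at least one +, (1 − I(W_n^s))/δ_n → 0 as n → ∞. -/
/-!
Let `D(V) = H(X | Y)` be the equivocation of `V` for a uniform input, so that
`1 - I(V) = D(V) / log 2`. The chain rule `D(V⁻) + D(V⁺) = 2 D(V)` reduces both claims to
`D(V⁺) = o(D(V))` as `D(V) → 0`: then `D(V⁻) ~ 2 D(V)`, and an induction along the sign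
sequence gives `D(V^{-⋯-}) ~ 2^λ D(V)`, while a single `+` anywhere makes `D(V^s) = o(D(V))`.
For the key estimate, the entropy `φ(a, b)` of an output with joint probabilities `a, b` is at
most `2 √(a b)`; as the joint probabilities of `V⁺` are products of those of `V`, this gives
`D(V⁺) ≤ Z(V)²`. Cauchy–Schwarz against the `φ(a, b)`, together with
`a b ≤ φ (φ / h(ε) + (a + b) / log ε⁻¹)`, gives `Z(V)² ≤ 4 D (D / h(ε) + 1 / log ε⁻¹)` for every
`ε ∈ (0, 1/2]`, and the choice `ε = D` yields `D(V⁺) ≤ 8 D / log D⁻¹`.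
-/

open scoped BigOperators

open PreChannel

open Real

/-- `(a + b) h(a / (a + b))` in nats: the contribution to `H(X | Y)` of an output whose joint
probabilities with the two inputs are `a` and `b`. -/
noncomputable def pairEntropy (a b : ℝ) : ℝ := negMulLog a + negMulLog b - negMulLog (a + b)

lemma pairEntropy_comm (a b : ℝ) : pairEntropy a b = pairEntropy b a := by
  simp only [pairEntropy, add_comm a b]; ring

lemma pairEntropy_mul (c a b : ℝ) : pairEntropy (c * a) (c * b) = c * pairEntropy a b := by
  simp only [pairEntropy, ← mul_add, negMulLog_mul]; ring

lemma pairEntropy_one_sub (p : ℝ) : pairEntropy p (1 - p) = binEntropy p := by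
  simp [pairEntropy, binEntropy_eq_negMulLog_add_negMulLog_one_sub]

lemma pairEntropy_chain (a b c d : ℝ) :
    pairEntropy (a * c + b * d) (a * d + b * c) +
        (pairEntropy (b * c) (a * d) + pairEntropy (a * c) (b * d)) =
      (c + d) * pairEntropy a b + (a + b) * pairEntropy c d := by
  have hsum : a * c + b * d + (a * d + b * c) = (a + b) * (c + d) := by ring
  simp only [pairEntropy, hsum, add_comm (b * c) (a * d), negMulLog_mul]; ring

lemma mul_log_div_eq {x s : ℝ} (hx : 0 ≤ x) (hxs : x ≤ s) :
    x * log (s / x) = negMulLog x + x * log s := by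
  rcases hx.eq_or_lt with rfl | hx
  · simp
  rw [log_div (by linarith) hx.ne', negMulLog]; ring

lemma mul_one_sub_div_le_mul_log_div {x s : ℝ} (hx : 0 ≤ x) (hxs : x ≤ s) :
    x * (1 - x / s) ≤ x * log (s / x) := by
  rcases hx.eq_or_lt with rfl | hx
  · simp
  have := one_sub_inv_le_log_of_pos (div_pos (hx.trans_le hxs) hx)
  rw [inv_div] at this
  exact mul_le_mul_of_nonneg_left this hx.le

lemma mul_log_div_le {x s : ℝ} (hx : 0 ≤ x) (hxs : x ≤ s) :
    x * log (s / x) ≤ 2 * (√(x * s) - x) := by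
  rcases hx.eq_or_lt with rfl | hx
  · simp
  have hs : 0 < s := hx.trans_le hxs
  have hu : 0 < √x := sqrt_pos.2 hx
  have hlog : log (s / x) = 2 * log (√s / √x) := by
    rw [← log_rpow (by positivity), div_rpow (sqrt_nonneg _) (sqrt_nonneg _)]
    norm_num [sq_sqrt hs.le, sq_sqrt hx.le]
  have := log_le_sub_one_of_pos (show 0 < √s / √x by positivity)
  rw [hlog, sqrt_mul hx.le]
  calc x * (2 * log (√s / √x)) ≤ x * (2 * (√s / √x - 1)) := by gcongr
    _ = 2 * (√x * √s - x) := by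
      field_simp
      linear_combination (-√s) * mul_self_sqrt hx.le

lemma pairEntropy_eq {a b : ℝ} (ha : 0 ≤ a) (hb : 0 ≤ b) :
    pairEntropy a b = a * log ((a + b) / a) + b * log ((a + b) / b) := by
  rw [mul_log_div_eq ha (by linarith), mul_log_div_eq hb (by linarith), pairEntropy]
  simp only [negMulLog]; ring

lemma mul_div_add_le_pairEntropy {a b : ℝ} (ha : 0 ≤ a) (hb : 0 ≤ b) :
    a * b / (a + b) ≤ pairEntropy a b := by
  have h₁ := mul_one_sub_div_le_mul_log_div ha (le_add_of_nonneg_right hb)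
  have h₂ := mul_one_sub_div_le_mul_log_div hb (le_add_of_nonneg_left ha)
  rw [pairEntropy_eq ha hb]
  rcases (add_nonneg ha hb).eq_or_lt with hs | hs
  · simp [← hs]
  have : a * b / (a + b) = b * (1 - b / (a + b)) := by field_simp; ring
  have ha' : 0 ≤ a * (1 - a / (a + b)) :=
    mul_nonneg ha (by rw [sub_nonneg, div_le_one hs]; linarith)
  linarith

lemma pairEntropy_nonneg {a b : ℝ} (ha : 0 ≤ a) (hb : 0 ≤ b) : 0 ≤ pairEntropy a b :=
  (div_nonneg (mul_nonneg ha hb) (add_nonneg ha hb)).trans (mul_div_add_le_pairEntropy ha hb)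

lemma pairEntropy_le_two_mul_sqrt {a b : ℝ} (ha : 0 ≤ a) (hb : 0 ≤ b) :
    pairEntropy a b ≤ 2 * √(a * b) := by
  have h₁ := mul_log_div_le ha (le_add_of_nonneg_right hb)
  have h₂ := mul_log_div_le hb (le_add_of_nonneg_left ha)
  rw [pairEntropy_eq ha hb]
  rw [sqrt_mul ha] at h₁ ⊢
  rw [sqrt_mul hb] at h₂
  have hua : √a ≤ √(a + b) := sqrt_le_sqrt (by linarith)
  have hub : √b ≤ √(a + b) := sqrt_le_sqrt (by linarith)
  have hs : √(a + b) ^ 2 = √a ^ 2 + √b ^ 2 := by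
    rw [sq_sqrt ha, sq_sqrt hb, sq_sqrt (by linarith)]
  nlinarith [mul_nonneg (sub_nonneg.2 hua) (sub_nonneg.2 hub), sq_sqrt ha, sq_sqrt hb]

lemma mul_le_pairEntropy_mul {a b ε : ℝ} (ha : 0 ≤ a) (hb : 0 ≤ b) (hε₀ : 0 < ε)
    (hε₁ : ε ≤ 2⁻¹) :
    a * b ≤ pairEntropy a b * (pairEntropy a b / binEntropy ε + (a + b) / log ε⁻¹) := by
  wlog hab : a ≤ b generalizing a b
  · have := this hb ha (le_of_not_ge hab)
    rwa [pairEntropy_comm, mul_comm b, add_comm b] at this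
  have hφ := pairEntropy_nonneg ha hb
  have hH : 0 < binEntropy ε := binEntropy_pos hε₀ (by linarith)
  have hL : 0 < log ε⁻¹ := log_pos ((one_lt_inv₀ hε₀).2 (by linarith))
  rcases ha.eq_or_lt with rfl | ha
  · simp only [zero_mul]; positivity
  set s := a + b
  have hs : 0 < s := by positivity
  have hab_le : a * b ≤ s * pairEntropy a b := by
    have := mul_div_add_le_pairEntropy ha.le hb
    rwa [div_le_iff₀ hs, mul_comm _ s] at this
  rcases le_or_gt ε (a / s) with hεp | hpε
  · -- `φ = s h(a / s) ≥ s h(ε)` and `a b ≤ s φ`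
    have hφs : pairEntropy a b = s * binEntropy (a / s) := by
      rw [← pairEntropy_one_sub, ← pairEntropy_mul]
      congr 1
      · field_simp
      · field_simp; ring
    have hmono : binEntropy ε ≤ binEntropy (a / s) :=
      binEntropy_strictMonoOn.monotoneOn ⟨hε₀.le, hε₁⟩
        ⟨by positivity, by rw [div_le_iff₀ hs]; linarith⟩ hεp
    have hsφ : s ≤ pairEntropy a b / binEntropy ε := by
      rw [le_div_iff₀ hH, hφs]; gcongr
    calc a * b ≤ s * pairEntropy a b := hab_le
      _ ≤ pairEntropy a b * (pairEntropy a b / binEntropy ε) := by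
        rw [mul_comm]; gcongr
      _ ≤ _ := by gcongr; exact le_add_of_nonneg_right (by positivity)
  · -- `φ ≥ a log (s / a) ≥ a log ε⁻¹` and `a b ≤ a s`
    have hlog : log ε⁻¹ ≤ log (s / a) := by
      rw [← inv_div]
      exact log_le_log (by positivity) ((inv_le_inv₀ hε₀ (by positivity)).2 hpε.le)
    have hb_term := mul_one_sub_div_le_mul_log_div hb (le_add_of_nonneg_left ha.le)
    have hb_nonneg : 0 ≤ b * (1 - b / s) :=
      mul_nonneg hb (by rw [sub_nonneg, div_le_one hs]; linarith)
    have hφa : a * log ε⁻¹ ≤ pairEntropy a b := by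
      rw [pairEntropy_eq ha.le hb]
      nlinarith
    calc a * b ≤ a * s := by gcongr; linarith
      _ = a * log ε⁻¹ * (s / log ε⁻¹) := by rw [mul_assoc, mul_div_cancel₀ _ hL.ne']
      _ ≤ pairEntropy a b * (s / log ε⁻¹) := by gcongr
      _ ≤ _ := by gcongr; exact le_add_of_nonneg_left (by positivity)

namespace PreChannel

structure IsStochastic (V : PreChannel) : Prop where
  nonneg : ∀ x y, 0 ≤ V.W x y
  sum_eq_one : ∀ x, ∑ y, V.W x y = 1

lemma IsBMS.isStochastic {V : PreChannel} (h : V.IsBMS) : V.IsStochastic := ⟨h.1, h.2.1⟩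

/-- The joint law of input and output for a uniform input. -/
noncomputable def joint (V : PreChannel) (x : Bool) (y : V.Y) : ℝ := V.W x y / 2

/-- The equivocation `H(X | Y)`, in nats, for a uniform input `X`. -/
noncomputable def condEntropy (V : PreChannel) : ℝ :=
  ∑ y, pairEntropy (V.joint false y) (V.joint true y)

variable {V : PreChannel}

lemma IsStochastic.joint_nonneg (hV : V.IsStochastic) (x : Bool) (y : V.Y) : 0 ≤ V.joint x y :=
  div_nonneg (hV.nonneg x y) zero_le_two

lemma IsStochastic.sum_joint (hV : V.IsStochastic) :
    ∑ y, (V.joint false y + V.joint true y) = 1 := by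
  simp only [joint, Finset.sum_add_distrib, ← Finset.sum_div, hV.sum_eq_one]; norm_num

lemma IsStochastic.condEntropy_nonneg (hV : V.IsStochastic) : 0 ≤ V.condEntropy :=
  Finset.sum_nonneg fun y _ => pairEntropy_nonneg (hV.joint_nonneg _ y) (hV.joint_nonneg _ y)

lemma mul_logb_two_mul_div {x s : ℝ} (hx : 0 ≤ x) (hxs : x ≤ s) :
    x * logb 2 (2 * x / s) = x - x * log (s / x) / log 2 := by
  rcases hx.eq_or_lt with rfl | hx
  · simp
  have hs : 0 < s := hx.trans_le hxs
  rw [logb, log_div (by positivity) hs.ne', log_mul two_ne_zero hx.ne', log_div hs.ne' hx.ne']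
  field_simp
  ring

lemma IsStochastic.one_sub_cap (hV : V.IsStochastic) : 1 - cap V = V.condEntropy / log 2 := by
  have hterm : ∀ y, ∑ x : Bool, (1 / 2) * V.W x y *
      logb 2 (V.W x y / ((1 / 2) * V.W false y + (1 / 2) * V.W true y)) =
      V.joint false y + V.joint true y -
        pairEntropy (V.joint false y) (V.joint true y) / log 2 := by
    intro y
    have ha := hV.joint_nonneg false y
    have hb := hV.joint_nonneg true y
    have hW : ∀ x, V.W x y / ((1 / 2) * V.W false y + (1 / 2) * V.W true y) =
        2 * V.joint x y / (V.joint false y + V.joint true y) := fun x => by simp only [joint]; ring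
    rw [Fintype.sum_bool, hW, hW, pairEntropy_eq ha hb,
      show (1 / 2) * V.W true y = V.joint true y by simp only [joint]; ring,
      show (1 / 2) * V.W false y = V.joint false y by simp only [joint]; ring,
      mul_logb_two_mul_div ha (le_add_of_nonneg_right hb),
      mul_logb_two_mul_div hb (le_add_of_nonneg_left ha)]
    ring
  rw [cap, Finset.sum_comm, Finset.sum_congr rfl fun y _ => hterm y, Finset.sum_sub_distrib,
    hV.sum_joint, condEntropy, Finset.sum_div]
  ring

lemma IsStochastic.minus (hV : V.IsStochastic) : V.minus.IsStochastic where
  nonneg x p := by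
    show 0 ≤ ∑ u : Bool, 1 / 2 * V.W (x ^^ u) p.1 * V.W u p.2
    exact Finset.sum_nonneg fun u _ =>
      mul_nonneg (mul_nonneg (by norm_num) (hV.nonneg _ _)) (hV.nonneg _ _)
  sum_eq_one x := by
    show ∑ p : V.Y × V.Y, ∑ u : Bool, 1 / 2 * V.W (x ^^ u) p.1 * V.W u p.2 = 1
    simp only [Fintype.sum_prod_type, Fintype.sum_bool, Finset.sum_add_distrib, mul_assoc,
      ← Finset.mul_sum, ← Finset.sum_mul, hV.sum_eq_one]
    norm_num

lemma IsStochastic.plus (hV : V.IsStochastic) : V.plus.IsStochastic where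
  nonneg x p := mul_nonneg (mul_nonneg (by norm_num) (hV.nonneg _ _)) (hV.nonneg _ _)
  sum_eq_one x := by
    show ∑ p : V.Y × V.Y × Bool, 1 / 2 * V.W (p.2.2 ^^ x) p.1 * V.W x p.2.1 = 1
    simp only [Fintype.sum_prod_type, Fintype.sum_bool, Finset.sum_add_distrib, mul_assoc,
      ← Finset.mul_sum, ← Finset.sum_mul, hV.sum_eq_one]
    norm_num

lemma IsStochastic.polarSeq (hV : V.IsStochastic) (s : List Bool) :
    (V.polarSeq s).IsStochastic := by
  induction s generalizing V with
  | nil => exact hV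
  | cons b s ih =>
    cases b
    · exact ih hV.minus
    · exact ih hV.plus

lemma condEntropy_minus (V : PreChannel) : V.minus.condEntropy = ∑ y₁, ∑ y₂,
    pairEntropy (V.joint false y₁ * V.joint false y₂ + V.joint true y₁ * V.joint true y₂)
      (V.joint false y₁ * V.joint true y₂ + V.joint true y₁ * V.joint false y₂) := by
  show ∑ p : V.Y × V.Y, pairEntropy (V.minus.W false p / 2) (V.minus.W true p / 2) = _
  rw [Fintype.sum_prod_type]
  refine Finset.sum_congr rfl fun y₁ _ => Finset.sum_congr rfl fun y₂ _ => ?_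
  simp only [minus, joint, Fintype.sum_bool]
  congr 1 <;> simp <;> ring

lemma condEntropy_plus (V : PreChannel) : V.plus.condEntropy = ∑ y₁, ∑ y₂,
    (pairEntropy (V.joint true y₁ * V.joint false y₂) (V.joint false y₁ * V.joint true y₂) +
      pairEntropy (V.joint false y₁ * V.joint false y₂) (V.joint true y₁ * V.joint true y₂)) := by
  show ∑ p : V.Y × V.Y × Bool, pairEntropy (V.plus.W false p / 2) (V.plus.W true p / 2) = _
  simp only [Fintype.sum_prod_type, Fintype.sum_bool]
  refine Finset.sum_congr rfl fun y₁ _ => Finset.sum_congr rfl fun y₂ _ => ?_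
  simp only [plus, joint]
  congr 1 <;> congr 1 <;> simp <;> ring

lemma IsStochastic.condEntropy_minus_add_plus (hV : V.IsStochastic) :
    V.minus.condEntropy + V.plus.condEntropy = 2 * V.condEntropy := by
  simp only [condEntropy_minus, condEntropy_plus, ← Finset.sum_add_distrib, pairEntropy_chain]
  simp only [Finset.sum_add_distrib, ← Finset.sum_mul, ← Finset.mul_sum, hV.sum_joint, one_mul]
  rw [condEntropy]
  ring

lemma IsStochastic.condEntropy_polarSeq_le (hV : V.IsStochastic) (s : List Bool) :
    (V.polarSeq s).condEntropy ≤ 2 ^ s.length * V.condEntropy := by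
  induction s generalizing V with
  | nil => simp only [List.length_nil, pow_zero, one_mul]; exact le_rfl
  | cons b s ih =>
    have hstep : (if b then V.plus else V.minus).condEntropy ≤ 2 * V.condEntropy := by
      have := hV.condEntropy_minus_add_plus
      cases b
      · simp only [Bool.false_eq_true, ↓reduceIte]; linarith [hV.plus.condEntropy_nonneg]
      · simp only [↓reduceIte]; linarith [hV.minus.condEntropy_nonneg]
    have hb : (if b then V.plus else V.minus).IsStochastic := by
      cases b <;> simp [hV.plus, hV.minus]
    calc ((if b then V.plus else V.minus).polarSeq s).condEntropy
        ≤ 2 ^ s.length * (if b then V.plus else V.minus).condEntropy := ih hb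
      _ ≤ 2 ^ s.length * (2 * V.condEntropy) := by gcongr
      _ = 2 ^ (b :: s).length * V.condEntropy := by rw [List.length_cons, pow_succ]; ring

lemma Zb_eq (V : PreChannel) : Zb V = 2 * ∑ y, √(V.joint false y * V.joint true y) := by
  rw [Zb, Finset.mul_sum]
  refine Finset.sum_congr rfl fun y _ => ?_
  rw [joint, joint, div_mul_div_comm, sqrt_div' _ (by norm_num : (0:ℝ) ≤ 2 * 2),
    sqrt_mul_self zero_le_two]
  ring

lemma IsStochastic.condEntropy_plus_le_Zb_sq (hV : V.IsStochastic) :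
    V.plus.condEntropy ≤ Zb V ^ 2 := by
  have hpoint : ∀ y₁ y₂,
      pairEntropy (V.joint true y₁ * V.joint false y₂) (V.joint false y₁ * V.joint true y₂) +
        pairEntropy (V.joint false y₁ * V.joint false y₂) (V.joint true y₁ * V.joint true y₂) ≤
      4 * (√(V.joint false y₁ * V.joint true y₁) * √(V.joint false y₂ * V.joint true y₂)) := by
    intro y₁ y₂
    have h := hV.joint_nonneg
    have h₁ := pairEntropy_le_two_mul_sqrt (mul_nonneg (h true y₁) (h false y₂))
      (mul_nonneg (h false y₁) (h true y₂))
    have h₂ := pairEntropy_le_two_mul_sqrt (mul_nonneg (h false y₁) (h false y₂))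
      (mul_nonneg (h true y₁) (h true y₂))
    rw [← sqrt_mul (mul_nonneg (h false y₁) (h true y₁))]
    have e₁ : V.joint true y₁ * V.joint false y₂ * (V.joint false y₁ * V.joint true y₂) =
        V.joint false y₁ * V.joint true y₁ * (V.joint false y₂ * V.joint true y₂) := by ring
    have e₂ : V.joint false y₁ * V.joint false y₂ * (V.joint true y₁ * V.joint true y₂) =
        V.joint false y₁ * V.joint true y₁ * (V.joint false y₂ * V.joint true y₂) := by ring
    rw [e₁] at h₁
    rw [e₂] at h₂
    linarith
  rw [condEntropy_plus, Zb_eq, mul_pow, sq (∑ y, _), Finset.sum_mul_sum]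
  calc _ ≤ ∑ y₁, ∑ y₂, 4 * (√(V.joint false y₁ * V.joint true y₁) *
        √(V.joint false y₂ * V.joint true y₂)) :=
      Finset.sum_le_sum fun y₁ _ => Finset.sum_le_sum fun y₂ _ => hpoint y₁ y₂
    _ = _ := by simp only [← Finset.mul_sum]; norm_num

lemma IsStochastic.Zb_sq_le (hV : V.IsStochastic) {ε : ℝ} (hε₀ : 0 < ε) (hε₁ : ε ≤ 2⁻¹) :
    Zb V ^ 2 ≤ 4 * V.condEntropy * (V.condEntropy / binEntropy ε + 1 / log ε⁻¹) := by
  have h := hV.joint_nonneg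
  have hH : 0 < binEntropy ε := binEntropy_pos hε₀ (by linarith)
  have hL : 0 < log ε⁻¹ := log_pos ((one_lt_inv₀ hε₀).2 (by linarith))
  have hcs : (∑ y, √(V.joint false y * V.joint true y)) ^ 2 ≤ V.condEntropy *
      ∑ y, (pairEntropy (V.joint false y) (V.joint true y) / binEntropy ε +
        (V.joint false y + V.joint true y) / log ε⁻¹) :=
    Finset.sum_sq_le_sum_mul_sum_of_sq_le_mul _
      (fun y _ => pairEntropy_nonneg (h false y) (h true y))
      (fun y _ => add_nonneg (div_nonneg (pairEntropy_nonneg (h false y) (h true y)) hH.le)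
        (div_nonneg (add_nonneg (h false y) (h true y)) hL.le))
      (fun y _ => by
        rw [sq_sqrt (mul_nonneg (h false y) (h true y))]
        exact mul_le_pairEntropy_mul (h false y) (h true y) hε₀ hε₁)
  have hsum : ∑ y, (pairEntropy (V.joint false y) (V.joint true y) / binEntropy ε +
      (V.joint false y + V.joint true y) / log ε⁻¹) =
      V.condEntropy / binEntropy ε + 1 / log ε⁻¹ := by
    rw [Finset.sum_add_distrib, ← Finset.sum_div, ← Finset.sum_div, hV.sum_joint]; rfl
  rw [Zb_eq, mul_pow, mul_assoc, ← hsum]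
  linarith

lemma IsStochastic.condEntropy_plus_le (hV : V.IsStochastic) (hD : V.condEntropy ≤ 2⁻¹) :
    V.plus.condEntropy ≤ 8 * V.condEntropy / log V.condEntropy⁻¹ := by
  rcases hV.condEntropy_nonneg.eq_or_lt with hD0 | hDpos
  · have := hV.condEntropy_minus_add_plus
    rw [← hD0] at this ⊢
    simp only [mul_zero, zero_div]
    linarith [hV.minus.condEntropy_nonneg]
  set D := V.condEntropy
  have hL : 0 < log D⁻¹ := log_pos ((one_lt_inv₀ hDpos).2 (by linarith))
  have hH : 0 < binEntropy D := binEntropy_pos hDpos (by linarith)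
  have hHD : D * log D⁻¹ ≤ binEntropy D := by
    rw [binEntropy_eq_negMulLog_add_negMulLog_one_sub, negMulLog, log_inv]
    linarith [negMulLog_nonneg (by linarith : 0 ≤ 1 - D) (by linarith)]
  have hratio : D / binEntropy D ≤ 1 / log D⁻¹ := by
    rw [div_le_div_iff₀ hH hL]; linarith
  calc V.plus.condEntropy ≤ Zb V ^ 2 := hV.condEntropy_plus_le_Zb_sq
    _ ≤ 4 * D * (D / binEntropy D + 1 / log D⁻¹) := hV.Zb_sq_le hDpos hD
    _ ≤ 4 * D * (1 / log D⁻¹ + 1 / log D⁻¹) := by gcongr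
    _ = 8 * D / log D⁻¹ := by ring

end PreChannel

open Filter Topology Asymptotics

lemma tendsto_inv_log_inv_nhds_zero : Tendsto (fun x : ℝ => (log x⁻¹)⁻¹) (𝓝 0) (𝓝 0) := by
  have h : ContinuousWithinAt (fun x : ℝ => (log x⁻¹)⁻¹) {0}ᶜ 0 := by
    simpa [ContinuousWithinAt] using tendsto_log_nhdsNE_zero.inv_tendsto_atBot.neg
  simpa using (continuousWithinAt_compl_self.1 h).tendsto

section Asymptotics

variable {ι : Type*} {l : Filter ι} {V : ι → PreChannel}

lemma isLittleO_condEntropy_plus (hV : ∀ i, (V i).IsStochastic)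
    (hD : Tendsto (fun i => (V i).condEntropy) l (𝓝 0)) :
    (fun i => (V i).plus.condEntropy) =o[l] fun i => (V i).condEntropy := by
  have hk : (fun i => 8 * (log (V i).condEntropy⁻¹)⁻¹) =o[l] fun _ => (1 : ℝ) :=
    (isLittleO_one_iff ℝ).2 (by simpa using (tendsto_inv_log_inv_nhds_zero.comp hD).const_mul 8)
  have hbig : (fun i => (V i).plus.condEntropy) =O[l]
      fun i => (V i).condEntropy * (8 * (log (V i).condEntropy⁻¹)⁻¹) := by
    refine IsBigO.of_bound 1 ?_
    filter_upwards [hD.eventually (ge_mem_nhds (by norm_num : (0:ℝ) < 2⁻¹))] with i hi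
    rw [one_mul, norm_of_nonneg (hV i).plus.condEntropy_nonneg]
    calc _ ≤ 8 * (V i).condEntropy / log (V i).condEntropy⁻¹ := (hV i).condEntropy_plus_le hi
      _ = _ := by ring
      _ ≤ _ := le_norm_self _
  simpa using hbig.trans_isLittleO ((isBigO_refl _ l).mul_isLittleO hk)

lemma isEquivalent_condEntropy_minus (hV : ∀ i, (V i).IsStochastic)
    (hD : Tendsto (fun i => (V i).condEntropy) l (𝓝 0)) :
    (fun i => (V i).minus.condEntropy) ~[l] fun i => 2 * (V i).condEntropy := by
  have h : (fun i => (V i).minus.condEntropy - 2 * (V i).condEntropy) =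
      fun i => -(V i).plus.condEntropy := by
    funext i; linarith [(hV i).condEntropy_minus_add_plus]
  refine IsLittleO.isEquivalent ?_
  show (fun i => (V i).minus.condEntropy - 2 * (V i).condEntropy) =o[l] _
  rw [h]
  exact (isLittleO_condEntropy_plus hV hD).neg_left.const_mul_right two_ne_zero

lemma isBigO_condEntropy_polarSeq (hV : ∀ i, (V i).IsStochastic) (s : List Bool) :
    (fun i => ((V i).polarSeq s).condEntropy) =O[l] fun i => (V i).condEntropy :=
  IsBigO.of_bound (2 ^ s.length) (Eventually.of_forall fun i => by
    rw [norm_of_nonneg ((hV i).polarSeq s).condEntropy_nonneg,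
      norm_of_nonneg (hV i).condEntropy_nonneg]
    exact (hV i).condEntropy_polarSeq_le s)

lemma tendsto_condEntropy_minus (hV : ∀ i, (V i).IsStochastic)
    (hD : Tendsto (fun i => (V i).condEntropy) l (𝓝 0)) :
    Tendsto (fun i => (V i).minus.condEntropy) l (𝓝 0) :=
  -- `V.polarSeq [false]` unfolds to `V.minus`
  (isBigO_condEntropy_polarSeq hV [false]).trans_tendsto hD

lemma isEquivalent_condEntropy_polarSeq_replicate (hV : ∀ i, (V i).IsStochastic)
    (hD : Tendsto (fun i => (V i).condEntropy) l (𝓝 0)) (k : ℕ) :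
    (fun i => ((V i).polarSeq (List.replicate k false)).condEntropy) ~[l]
      fun i => 2 ^ k * (V i).condEntropy := by
  induction k generalizing V with
  | zero => simp only [pow_zero, one_mul]; exact IsEquivalent.refl
  | succ k ih =>
    refine (ih (fun i => (hV i).minus) (tendsto_condEntropy_minus hV hD)).trans ?_
    exact ((IsEquivalent.refl (u := fun _ => (2 : ℝ) ^ k)).mul
      (isEquivalent_condEntropy_minus hV hD)).congr_right
      (Eventually.of_forall fun i => by simp only [Pi.mul_apply, pow_succ]; ring)

lemma isLittleO_condEntropy_polarSeq (hV : ∀ i, (V i).IsStochastic)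
    (hD : Tendsto (fun i => (V i).condEntropy) l (𝓝 0)) {s : List Bool} (hs : true ∈ s) :
    (fun i => ((V i).polarSeq s).condEntropy) =o[l] fun i => (V i).condEntropy := by
  induction s generalizing V with
  | nil => simp at hs
  | cons b s ih =>
    cases b
    · have hs : true ∈ s := by simpa using hs
      exact (ih (fun i => (hV i).minus) (tendsto_condEntropy_minus hV hD) hs).trans_isBigO
        (isBigO_condEntropy_polarSeq hV [false])
    · exact (isBigO_condEntropy_polarSeq (fun i => (hV i).plus) s).trans_isLittleO
        (isLittleO_condEntropy_plus hV hD)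

end Asymptotics

theorem stmt14_general (lam : ℕ) (W : ℕ → PreChannel)
    (hBMS : ∀ n, (W n).IsBMS)
    (hδpos : ∀ n, 0 < 1 - cap (W n))
    (hδ0 : Filter.Tendsto (fun n => 1 - cap (W n)) Filter.atTop (nhds 0)) :
    (Filter.Tendsto (fun n =>
        (1 - cap (polarSeq (W n) (List.replicate lam false))) / (1 - cap (W n)))
      Filter.atTop (nhds (2 ^ lam))) ∧
    (∀ s : List Bool, s.length = lam → true ∈ s →
      Filter.Tendsto (fun n => (1 - cap (polarSeq (W n) s)) / (1 - cap (W n)))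
        Filter.atTop (nhds 0)) := by
  have hV n : (W n).IsStochastic := (hBMS n).isStochastic
  have hlog : (0 : ℝ) < log 2 := log_pos one_lt_two
  have hratio (s : List Bool) : (fun n => (1 - cap ((W n).polarSeq s)) / (1 - cap (W n))) =
      fun n => ((W n).polarSeq s).condEntropy / (W n).condEntropy := funext fun n => by
    rw [(hV n).one_sub_cap, ((hV n).polarSeq s).one_sub_cap, div_div_div_cancel_right₀ hlog.ne']
  have hD : Tendsto (fun n => (W n).condEntropy) atTop (𝓝 0) := by
    simpa [(hV _).one_sub_cap, mul_div_cancel₀ _ hlog.ne'] using hδ0.const_mul (log 2)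
  have hDne n : (W n).condEntropy ≠ 0 := by
    have := hδpos n
    rw [(hV n).one_sub_cap] at this
    exact ((div_pos_iff_of_pos_right hlog).1 this).ne'
  refine ⟨?_, fun s _ hs => ?_⟩
  · rw [hratio]
    refine ((isEquivalent_condEntropy_polarSeq_replicate hV hD lam).div
      IsEquivalent.refl).symm.tendsto_nhds (tendsto_const_nhds.congr fun n => ?_)
    simp [hDne n]
  · rw [hratio]
    exact (isLittleO_condEntropy_polarSeq hV hD hs).tendsto_div_nhds_zero

/-- asymptotics of `1 − I(W^s)` for the all-minus sequence and for
sequences containing a plus. -/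
theorem stmt14 (lam : ℕ) (hlam : 1 ≤ lam) (W : ℕ → PreChannel)
    (hBMS : ∀ n, (W n).IsBMS)
    (hδpos : ∀ n, 0 < 1 - cap (W n))
    (hδ0 : Filter.Tendsto (fun n => 1 - cap (W n)) Filter.atTop (nhds 0)) :
    (Filter.Tendsto (fun n =>
        (1 - cap (polarSeq (W n) (List.replicate lam false))) / (1 - cap (W n)))
      Filter.atTop (nhds (2 ^ lam))) ∧
    (∀ s : List Bool, s.length = lam → true ∈ s →
      Filter.Tendsto (fun n => (1 - cap (polarSeq (W n) s)) / (1 - cap (W n)))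
        Filter.atTop (nhds 0)) :=
  stmt14_general lam W hBMS hδpos hδ0
end

section
/- Let ε_l(x) = x − 1 + h₂( h₂⁻¹(1−x)·[2 − 2h₂⁻¹(1−x)] ) for x ∈ (0,1). Then lim_{δ→0⁺} ε_l(1−δ)/δ = 1; that is, ε_l(1−δ) = δ + o(δ) as δ → 0⁺. -/
/-!
Put `y = h₂⁻¹(δ)`, so that `δ = h₂(y)` and `ε_l(1 - δ) / δ = h₂(y (2 - 2y)) / h₂(y) - 1`.
Near `0⁺` the binary entropy is asymptotic to `-y log y`, and `log` is insensitive to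
multiplicative constants there, so `h₂(f(y)) / h₂(y) → c` whenever `f(y) ~ c y`; here `c = 2`.
Finally `h₂⁻¹(δ) → 0⁺`, because `y ≤ h₂(y)` on `[0, 1/2]`.
-/

open scoped BigOperators

open PreChannel

open Filter Topology Set Real Asymptotics

lemma Real.tendsto_norm_log_nhdsGT_zero : Tendsto (fun y => ‖log y‖) (𝓝[>] 0) atTop :=
  tendsto_abs_atBot_atTop.comp tendsto_log_nhdsGT_zero

lemma Real.isEquivalent_binEntropy_negMulLog_nhdsGT_zero : binEntropy ~[𝓝[>] 0] negMulLog := by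
  have hsmall : (fun x => negMulLog (1 - x)) =o[𝓝[>] 0] negMulLog := by
    have hbound : (fun x => negMulLog (1 - x)) =O[𝓝[>] 0] fun x => x := by
      refine IsBigO.of_bound 1 ?_
      filter_upwards [Ioo_mem_nhdsGT (zero_lt_one' ℝ)] with x ⟨hx0, hx1⟩
      rw [one_mul, norm_of_nonneg (negMulLog_nonneg (by linarith) (by linarith)),
        norm_of_nonneg hx0.le]
      linarith [negMulLog_le_one_sub_self (x := 1 - x) (by linarith)]
    have hlog : (fun _ => (1 : ℝ)) =o[𝓝[>] 0] fun x => -log x :=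
      isLittleO_one_left_iff ℝ |>.2 <| by simpa only [norm_neg] using tendsto_norm_log_nhdsGT_zero
    have := (isBigO_refl (fun x : ℝ => x) _).mul_isLittleO hlog
    simp only [mul_one] at this
    simpa [negMulLog_eq_neg] using hbound.trans_isLittleO this
  have := (IsEquivalent.refl (u := negMulLog)).add_isLittleO hsmall
  simpa [Pi.add_def, ← binEntropy_eq_negMulLog_add_negMulLog_one_sub] using this

lemma Asymptotics.IsEquivalent.log_of_tendsto_nhdsGT_zero {α : Type*} {l : Filter α}
    {u v : α → ℝ} (huv : u ~[l] v) (hv : Tendsto v l (𝓝[>] 0)) :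
    (fun x => Real.log (u x)) ~[l] fun x => Real.log (v x) := by
  simpa [log_inv] using (huv.inv.log (tendsto_inv_nhdsGT_zero.comp hv)).neg

lemma Real.isEquivalent_log_const_mul_nhdsGT_zero {c : ℝ} (hc : 0 < c) :
    (fun y => log (c * y)) ~[𝓝[>] 0] log := by
  refine (IsEquivalent.refl.const_add_of_norm_tendsto_atTop (c := log c)
    tendsto_norm_log_nhdsGT_zero).congr_left ?_
  filter_upwards [self_mem_nhdsWithin] with y (hy : 0 < y)
  rw [log_mul hc.ne' hy.ne']

lemma tendsto_nhdsGT_zero_of_isEquivalent_const_mul {f : ℝ → ℝ} {c : ℝ} (hc : 0 < c)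
    (hf : f ~[𝓝[>] 0] fun y => c * y) : Tendsto f (𝓝[>] 0) (𝓝[>] 0) := by
  have hcy : Tendsto (fun y => c * y) (𝓝[>] 0) (𝓝 0) := by
    simpa using (tendsto_id (x := 𝓝[>] (0 : ℝ))).mono_right nhdsWithin_le_nhds |>.const_mul c
  refine tendsto_nhdsWithin_iff.2 ⟨hf.symm.tendsto_nhds hcy, hf.eventually_pos ?_⟩
  filter_upwards [self_mem_nhdsWithin] with y (hy : 0 < y) using mul_pos hc hy

lemma Real.tendsto_binEntropy_div_binEntropy_of_isEquivalent {f : ℝ → ℝ} {c : ℝ} (hc : 0 < c)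
    (hf : f ~[𝓝[>] 0] fun y => c * y) :
    Tendsto (fun y => binEntropy (f y) / binEntropy y) (𝓝[>] 0) (𝓝 c) := by
  have hlog : (fun y => log (f y)) ~[𝓝[>] 0] log :=
    (hf.log_of_tendsto_nhdsGT_zero (tendsto_nhdsGT_zero_of_isEquivalent_const_mul hc
      IsEquivalent.refl)).trans (isEquivalent_log_const_mul_nhdsGT_zero hc)
  have hnum : (fun y => binEntropy (f y)) ~[𝓝[>] 0] fun y => c * negMulLog y := by
    refine (isEquivalent_binEntropy_negMulLog_nhdsGT_zero.comp_tendsto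
      (tendsto_nhdsGT_zero_of_isEquivalent_const_mul hc hf)).trans ?_
    simpa [Function.comp_def, negMulLog_eq_neg, mul_assoc] using (hf.mul hlog).neg
  refine (hnum.div isEquivalent_binEntropy_negMulLog_nhdsGT_zero).symm.tendsto_nhds
    (tendsto_const_nhds.congr' ?_)
  filter_upwards [Ioo_mem_nhdsGT (zero_lt_one' ℝ)] with y ⟨hy0, hy1⟩
  have : negMulLog y ≠ 0 := by
    rw [negMulLog_eq_neg]; exact neg_ne_zero.2 (mul_ne_zero hy0.ne' (log_neg hy0 hy1).ne)
  simp [this]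

lemma h2_eq_binEntropy_div_log_two (x : ℝ) : h2 x = binEntropy x / log 2 := by
  simp only [h2, binEntropy, logb, log_inv]
  ring

lemma self_le_h2 {x : ℝ} (hx0 : 0 ≤ x) (hx : x ≤ 1 / 2) : x ≤ h2 x := by
  rw [h2_eq_binEntropy_div_log_two, le_div_iff₀ (log_pos one_lt_two),
    binEntropy_eq_negMulLog_add_negMulLog_one_sub]
  rcases hx0.eq_or_lt with rfl | hx0
  · simp
  have hrest := negMulLog_nonneg (x := 1 - x) (by linarith) (by linarith)
  have hlog : log x ≤ -log 2 := by
    rw [← log_inv]; exact log_le_log hx0 (by linarith)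
  have : x * log 2 ≤ negMulLog x := by
    rw [negMulLog]; nlinarith
  linarith

lemma h2_surjOn : SurjOn h2 (Icc 0 (1 / 2)) (Icc 0 1) := by
  have hcont : ContinuousOn h2 (Icc 0 (1 / 2)) := by
    rw [funext h2_eq_binEntropy_div_log_two]
    fun_prop
  have h0 : h2 0 = 0 := by simp [h2]
  have h12 : h2 (1 / 2) = 1 := by
    rw [h2_eq_binEntropy_div_log_two, one_div, binEntropy_two_inv,
      div_self (log_pos one_lt_two).ne']
  have h := intermediate_value_Icc (by norm_num : (0 : ℝ) ≤ 1 / 2) hcont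
  rw [h0, h12] at h
  exact h

lemma h2inv_mem_Icc {δ : ℝ} (hδ : δ ∈ Icc (0 : ℝ) 1) : h2inv δ ∈ Icc (0 : ℝ) (1 / 2) :=
  Function.invFunOn_mem (h2_surjOn hδ)

lemma h2_h2inv {δ : ℝ} (hδ : δ ∈ Icc (0 : ℝ) 1) : h2 (h2inv δ) = δ :=
  Function.invFunOn_eq (h2_surjOn hδ)

lemma tendsto_h2inv_nhdsGT_zero : Tendsto h2inv (𝓝[>] 0) (𝓝[>] 0) := by
  have hIcc : ∀ᶠ δ in 𝓝[>] (0 : ℝ), δ ∈ Icc (0 : ℝ) 1 :=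
    Filter.mem_of_superset (Ioo_mem_nhdsGT (zero_lt_one' ℝ)) Ioo_subset_Icc_self
  refine tendsto_nhdsWithin_iff.2 ⟨?_, ?_⟩
  · refine tendsto_of_tendsto_of_tendsto_of_le_of_le' tendsto_const_nhds
      (tendsto_nhdsWithin_of_tendsto_nhds tendsto_id) ?_ ?_
    · filter_upwards [hIcc] with δ hδ using (h2inv_mem_Icc hδ).1
    · filter_upwards [hIcc] with δ hδ
      have ⟨h0, h1⟩ := h2inv_mem_Icc hδ
      simpa [h2_h2inv hδ] using self_le_h2 h0 h1
  · filter_upwards [hIcc, self_mem_nhdsWithin] with δ hδ (hδ0 : 0 < δ)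
    refine (h2inv_mem_Icc hδ).1.lt_of_ne fun h => hδ0.ne ?_
    rw [← h2_h2inv hδ, ← h, h2_eq_binEntropy_div_log_two, binEntropy_zero, zero_div]

/-- `ε_l(1−δ) = δ + o(δ)` as `δ → 0⁺`. -/
theorem stmt15 :
    Filter.Tendsto (fun δ : ℝ => epsl (1 - δ) / δ)
      (nhdsWithin 0 (Set.Ioi 0)) (nhds 1) := by
  have hf : (fun y : ℝ => y * (2 - 2 * y)) ~[𝓝[>] 0] fun y => 2 * y := by
    have h2 : (fun y : ℝ => 2 - 2 * y) ~[𝓝[>] 0] fun _ => 2 :=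
      (isEquivalent_const_iff_tendsto two_ne_zero).2 <|
        ((continuous_const.sub (continuous_const.mul continuous_id)).tendsto' 0 2
          (by norm_num)).mono_left nhdsWithin_le_nhds
    exact (IsEquivalent.refl.mul h2).congr_right (.of_forall fun y => mul_comm y 2)
  have hratio := ((tendsto_binEntropy_div_binEntropy_of_isEquivalent two_pos hf).comp
    tendsto_h2inv_nhdsGT_zero).sub_const 1
  rw [show (2 : ℝ) - 1 = 1 by norm_num] at hratio
  refine hratio.congr' ?_
  filter_upwards [Ioo_mem_nhdsGT (zero_lt_one' ℝ)] with δ ⟨hδ0, hδ1⟩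
  have hy := h2_h2inv ⟨hδ0.le, hδ1.le⟩
  rw [h2_eq_binEntropy_div_log_two] at hy
  rw [Function.comp_apply, epsl, sub_sub_cancel, h2_eq_binEntropy_div_log_two]
  generalize h2inv δ = y at hy ⊢
  have hne : binEntropy y ≠ 0 := by
    rintro h; rw [h, zero_div] at hy; exact hδ0.ne hy
  have hlog2 : log 2 ≠ 0 := (log_pos one_lt_two).ne'
  subst hy
  field_simp
  ring
end
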